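/- arXiv:1907.04626 — 12 statements merged into one kernel-verified Lean document; each statement's English description precedes it below -/
import Mathlib

section
/- The cardinality of V(f_{r,k}) = {x ∈ F_q^{rk} : f_{r,k}(x) = 0} equals (q−1)·q^{k−1}·(q^{r−1} − (q−1)^{r−1})^k + q^{rk−1}. -/
open Finset

/-- Index of the `i`-th variable of the `j`-th block of `r` variables inside `Fin (r*k)`. -/
def mIdx (r k : ℕ) (j : Fin k) (i : Fin r) : Fin (r * k) :=
  ⟨j.1 * r + i.1, by
    have hj := j.2; have hi := i.2
    calc j.1 * r + i.1 < (j.1 + 1) * r := by nlinarith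
      _ ≤ k * r := Nat.mul_le_mul_right r hj
      _ = r * k := Nat.mul_comm _ _⟩

/-- `f_{r,k}(x) = Σ_{j=0}^{k-1} x_{jr+1} ⋯ x_{jr+r}`. -/
def frk (F : Type) [Field F] (r k : ℕ) (x : Fin (r * k) → F) : F :=
  ∑ j : Fin k, ∏ i : Fin r, x (mIdx r k j i)

section Aux

variable {F : Type} [Field F] [Fintype F] [DecidableEq F]

def splitEquiv (α : Type*) (n : ℕ) : (Fin (n + 1) → α) ≃ α × (Fin n → α) where
  toFun y := (y 0, Fin.tail y)
  invFun p := Fin.cons p.1 p.2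
  left_inv y := Fin.cons_self_tail y
  right_inv := fun ⟨a, z⟩ => by
    simp only [Fin.cons_zero, Fin.tail_cons]

omit [Field F] [Fintype F] [DecidableEq F] in
lemma card_filter_equiv {β γ : Type*} [Fintype β] [Fintype γ]
    (e : β ≃ γ) (P : γ → Prop) [DecidablePred P] :
    (univ.filter fun b => P (e b)).card = (univ.filter P).card := by
  refine Finset.card_bij (fun b _ => e b) ?_ ?_ ?_
  · intro b hb
    simp only [mem_filter, mem_univ, true_and] at hb ⊢
    exact hb
  · intro a _ b _ h; exact e.injective h
  · intro c hc
    simp only [mem_filter, mem_univ, true_and] at hc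
    refine ⟨e.symm c, ?_, by simp⟩
    simp only [mem_filter, mem_univ, true_and, Equiv.apply_symm_apply]
    exact hc

omit [Field F] [Fintype F] [DecidableEq F] in
lemma card_filter_prod {β γ : Type*} [Fintype β] [Fintype γ] [DecidableEq β]
    (Q : β × γ → Prop) [DecidablePred Q] :
    (univ.filter Q).card = ∑ b : β, (univ.filter fun c => Q (b, c)).card := by
  rw [Finset.card_eq_sum_card_fiberwise (f := fun p => p.1) (t := univ)
    (fun _ _ => mem_univ _)]
  refine Finset.sum_congr rfl fun b _ => ?_
  refine Finset.card_bij (fun p _ => p.2) ?_ ?_ ?_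
  · intro p hp
    simp only [mem_filter, mem_univ, true_and] at hp ⊢
    rw [← hp.2]; exact hp.1
  · intro p hp p' hp' h
    simp only [mem_filter, mem_univ, true_and] at hp hp'
    exact Prod.ext (hp.2.trans hp'.2.symm) h
  · intro c hc
    simp only [mem_filter, mem_univ, true_and] at hc
    exact ⟨(b, c), by simp [hc], rfl⟩

omit [Field F] in
lemma sum_comp_card {A : Type*} [Fintype A] (g : A → F) (h : F → ℤ) :
    ∑ a : A, h (g a) = ∑ v : F, ((univ.filter fun a => g a = v).card : ℤ) * h v := by
  rw [← Finset.sum_fiberwise univ g (fun a => h (g a))]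
  refine Finset.sum_congr rfl fun v _ => ?_
  rw [Finset.sum_congr rfl (fun a ha => by rw [(mem_filter.mp ha).2]),
      Finset.sum_const, nsmul_eq_mul]

/-- number of `y ∈ F^r` with product `c` -/
def Ncard (F : Type) [Field F] [Fintype F] [DecidableEq F] (r : ℕ) (c : F) : ℕ :=
  (univ.filter fun y : Fin r → F => ∏ i, y i = c).card

lemma Ncard_one (c : F) : Ncard F 1 c = 1 := by
  rw [Ncard, Finset.card_eq_one]
  refine ⟨fun _ => c, ?_⟩
  ext y
  simp only [mem_filter, mem_univ, true_and, Fin.prod_univ_one, mem_singleton]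
  constructor
  · intro h; funext i; rw [Subsingleton.elim i 0, h]
  · intro h; rw [h]

lemma Ncard_ne (r : ℕ) {c : F} (hc : c ≠ 0) :
    Ncard F (r + 1) c = (Fintype.card F - 1) ^ r := by
  induction r generalizing c with
  | zero => simpa using Ncard_one c
  | succ r ih =>
    have h1 : Ncard F (r + 2) c =
        (univ.filter fun p : F × (Fin (r + 1) → F) => p.1 * ∏ i, p.2 i = c).card := by
      rw [Ncard, ← card_filter_equiv (splitEquiv F (r + 1))
        (fun p : F × (Fin (r + 1) → F) => p.1 * ∏ i, p.2 i = c)]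
      apply congrArg
      apply Finset.filter_congr
      intro y _
      rw [Fin.prod_univ_succ]
      exact Iff.rfl
    rw [h1, card_filter_prod]
    rw [← Finset.add_sum_erase univ _ (mem_univ (0 : F))]
    have h0 : (univ.filter fun z : Fin (r + 1) → F => (0 : F) * ∏ i, z i = c).card = 0 := by
      rw [Finset.card_eq_zero]
      ext z; simp [hc.symm]
    rw [h0, zero_add]
    have h2 : ∀ a ∈ univ.erase (0 : F),
        (univ.filter fun z : Fin (r + 1) → F => a * ∏ i, z i = c).card =
          (Fintype.card F - 1) ^ r := by
      intro a ha
      have ha0 : a ≠ 0 := (Finset.mem_erase.mp ha).1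
      have : (univ.filter fun z : Fin (r + 1) → F => a * ∏ i, z i = c) =
          (univ.filter fun z : Fin (r + 1) → F => ∏ i, z i = a⁻¹ * c) := by
        apply Finset.filter_congr
        intro z _
        rw [eq_inv_mul_iff_mul_eq₀ ha0]
      rw [this]
      exact ih (by simp [ha0, hc])
    rw [Finset.sum_congr rfl h2, Finset.sum_const, smul_eq_mul,
      Finset.card_erase_of_mem (mem_univ _), Finset.card_univ, pow_succ']

lemma Ncard_sum (r : ℕ) : ∑ c : F, Ncard F r c = Fintype.card F ^ r := by
  have h := Finset.sum_fiberwise (univ : Finset (Fin r → F))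
    (fun y => ∏ i, y i) (fun _ => (1 : ℕ))
  simp only [Finset.sum_const, smul_eq_mul, mul_one] at h
  simp only [Ncard]
  rw [h, Finset.card_univ, Fintype.card_fun, Fintype.card_fin]

/-- number of `y ∈ (F^r)^k` with sum of block-products equal to `c` -/
def cnt (F : Type) [Field F] [Fintype F] [DecidableEq F] (r k : ℕ) (c : F) : ℕ :=
  (univ.filter fun y : Fin k → Fin r → F => (∑ j, ∏ i, y j i) = c).card

lemma cnt_zero (r : ℕ) (c : F) : cnt F r 0 c = if c = 0 then 1 else 0 := by
  have hall : ∀ y : Fin 0 → Fin r → F, (∑ j, ∏ i, y j i) = (0 : F) := fun y => by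
    simp
  rw [cnt]
  by_cases hc : c = 0
  · subst hc
    rw [if_pos rfl, Finset.filter_true_of_mem (fun y _ => hall y),
      Finset.card_univ, Fintype.card_fun, Fintype.card_fin, pow_zero]
  · rw [if_neg hc, Finset.card_eq_zero, Finset.filter_false_of_mem]
    intro y _
    rw [hall y]
    exact fun h => hc h.symm

lemma cnt_sum (r k : ℕ) : ∑ c : F, cnt F r k c = (Fintype.card F ^ r) ^ k := by
  have h := Finset.sum_fiberwise (univ : Finset (Fin k → Fin r → F))
    (fun y => ∑ j, ∏ i, y j i) (fun _ => (1 : ℕ))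
  simp only [Finset.sum_const, smul_eq_mul, mul_one] at h
  simp only [cnt]
  rw [h, Finset.card_univ, Fintype.card_fun, Fintype.card_fun,
    Fintype.card_fin, Fintype.card_fin]

lemma cnt_succ (r k : ℕ) (c : F) :
    (cnt F r (k + 1) c : ℤ) =
      ∑ v : F, ((Ncard F r v : ℤ)) * (cnt F r k (c - v) : ℤ) := by
  have h1 : cnt F r (k + 1) c =
      (univ.filter fun p : (Fin r → F) × (Fin k → Fin r → F) =>
        (∏ i, p.1 i) + ∑ j, ∏ i, p.2 j i = c).card := by
    rw [cnt, ← card_filter_equiv (splitEquiv (Fin r → F) k)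
      (fun p : (Fin r → F) × (Fin k → Fin r → F) =>
        (∏ i, p.1 i) + ∑ j, ∏ i, p.2 j i = c)]
    apply congrArg
    apply Finset.filter_congr
    intro y _
    rw [Fin.sum_univ_succ]
    exact Iff.rfl
  have h2 : ∀ a : Fin r → F,
      (univ.filter fun z : Fin k → Fin r → F => (∏ i, a i) + ∑ j, ∏ i, z j i = c) =
        (univ.filter fun z : Fin k → Fin r → F => (∑ j, ∏ i, z j i) = c - ∏ i, a i) := by
    intro a
    apply Finset.filter_congr
    intro z _
    constructor
    · intro h; rw [eq_sub_iff_add_eq, add_comm]; exact h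
    · intro h; rw [add_comm, ← eq_sub_iff_add_eq]; exact h
  rw [h1, card_filter_prod]
  push_cast
  calc (∑ a : Fin r → F,
        ((univ.filter fun z : Fin k → Fin r → F =>
          (∏ i, a i) + ∑ j, ∏ i, z j i = c).card : ℤ))
      = ∑ a : Fin r → F, (cnt F r k (c - ∏ i, a i) : ℤ) := by
        refine Finset.sum_congr rfl fun a _ => ?_
        rw [h2 a]; rfl
    _ = ∑ v : F, ((Ncard F r v : ℤ)) * (cnt F r k (c - v) : ℤ) :=
        sum_comp_card (fun a : Fin r → F => ∏ i, a i) (fun v => (cnt F r k (c - v) : ℤ))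


lemma cast_Ncard_ne (r : ℕ) {v : F} (hv : v ≠ 0) :
    (Ncard F (r + 1) v : ℤ) = ((Fintype.card F : ℤ) - 1) ^ r := by
  have hq : 1 ≤ Fintype.card F := Fintype.card_pos
  rw [Ncard_ne r hv]
  push_cast [Nat.cast_sub hq]
  ring

lemma Ncard_total (r : ℕ) :
    (Ncard F (r + 1) 0 : ℤ) +
      ((Fintype.card F : ℤ) - 1) * ((Fintype.card F : ℤ) - 1) ^ r =
      (Fintype.card F : ℤ) ^ (r + 1) := by
  have h := Ncard_sum (F := F) (r + 1)
  have h2 : ∑ c : F, (Ncard F (r + 1) c : ℤ) = (Fintype.card F : ℤ) ^ (r + 1) := by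
    exact_mod_cast congrArg (Nat.cast : ℕ → ℤ) h
  rw [← Finset.add_sum_erase univ (fun c => (Ncard F (r + 1) c : ℤ)) (mem_univ 0)] at h2
  rw [Finset.sum_congr rfl (fun v hv => cast_Ncard_ne r (Finset.mem_erase.mp hv).1),
    Finset.sum_const, Finset.card_erase_of_mem (mem_univ _), Finset.card_univ,
    nsmul_eq_mul, Nat.cast_sub Fintype.card_pos, Nat.cast_one] at h2
  exact h2

lemma cnt_rec (r k : ℕ) (c : F) :
    (cnt F (r + 1) (k + 1) c : ℤ) =
      ((Ncard F (r + 1) 0 : ℤ) - ((Fintype.card F : ℤ) - 1) ^ r) * (cnt F (r + 1) k c : ℤ)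
      + ((Fintype.card F : ℤ) - 1) ^ r * ((Fintype.card F : ℤ) ^ (r + 1)) ^ k := by
  rw [cnt_succ]
  have split : ∀ v : F,
      (Ncard F (r + 1) v : ℤ) * (cnt F (r + 1) k (c - v) : ℤ) =
        ((Ncard F (r + 1) v : ℤ) - ((Fintype.card F : ℤ) - 1) ^ r) *
            (cnt F (r + 1) k (c - v) : ℤ)
          + ((Fintype.card F : ℤ) - 1) ^ r * (cnt F (r + 1) k (c - v) : ℤ) :=
    fun v => by ring
  rw [Finset.sum_congr rfl (fun v _ => split v), Finset.sum_add_distrib]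
  have hA : ∑ v : F, (((Ncard F (r + 1) v : ℤ) - ((Fintype.card F : ℤ) - 1) ^ r) *
      (cnt F (r + 1) k (c - v) : ℤ)) =
      ((Ncard F (r + 1) 0 : ℤ) - ((Fintype.card F : ℤ) - 1) ^ r) *
        (cnt F (r + 1) k c : ℤ) := by
    rw [Finset.sum_eq_single_of_mem 0 (mem_univ _)
      (fun v _ hv => by rw [cast_Ncard_ne r hv]; ring), sub_zero]
  have hC : ∑ v : F, (((Fintype.card F : ℤ) - 1) ^ r * (cnt F (r + 1) k (c - v) : ℤ)) =
      ((Fintype.card F : ℤ) - 1) ^ r * ((Fintype.card F : ℤ) ^ (r + 1)) ^ k := by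
    rw [← Finset.mul_sum]
    congr 1
    have h := Equiv.sum_comp (Equiv.subLeft c) (fun w => (cnt F (r + 1) k w : ℤ))
    simp only [Equiv.subLeft_apply] at h
    rw [h]
    exact_mod_cast congrArg (Nat.cast : ℕ → ℤ) (cnt_sum (F := F) (r + 1) k)
  rw [hA, hC]

lemma cnt_key (r : ℕ) : ∀ k : ℕ,
    (Fintype.card F : ℤ) * (cnt F (r + 1) k 0 : ℤ) =
      ((Fintype.card F : ℤ) ^ (r + 1)) ^ k +
      ((Fintype.card F : ℤ) - 1) *
        ((Fintype.card F : ℤ) *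
          ((Fintype.card F : ℤ) ^ r - ((Fintype.card F : ℤ) - 1) ^ r)) ^ k := by
  intro k
  induction k with
  | zero =>
    rw [cnt_zero, if_pos rfl]
    push_cast
    ring
  | succ k ih =>
    rw [cnt_rec]
    have hT := Ncard_total (F := F) r
    linear_combination ((Ncard F (r + 1) 0 : ℤ) - ((Fintype.card F : ℤ) - 1) ^ r) * ih +
      ((((Fintype.card F : ℤ) ^ (r + 1)) ^ k) +
       ((Fintype.card F : ℤ) - 1) *
        ((Fintype.card F : ℤ) *
          ((Fintype.card F : ℤ) ^ r - ((Fintype.card F : ℤ) - 1) ^ r)) ^ k) * hT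


end Aux

def blockEquiv (F : Type) [Field F] (r k : ℕ) (hr : 0 < r) :
    (Fin (r * k) → F) ≃ (Fin k → Fin r → F) where
  toFun x j i := x (mIdx r k j i)
  invFun y m :=
    y ⟨m.1 / r, by
        apply Nat.div_lt_of_lt_mul
        exact m.2⟩
      ⟨m.1 % r, Nat.mod_lt _ hr⟩
  left_inv x := by
    funext m
    show x (mIdx r k ⟨m.1 / r, by apply Nat.div_lt_of_lt_mul; exact m.2⟩
      ⟨m.1 % r, Nat.mod_lt _ hr⟩) = x m
    apply congrArg
    apply Fin.ext
    show m.1 / r * r + m.1 % r = m.1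
    rw [Nat.mul_comm (m.1 / r) r]
    exact Nat.div_add_mod m.1 r
  right_inv y := by
    funext j i
    show y ⟨(j.1 * r + i.1) / r, _⟩ ⟨(j.1 * r + i.1) % r, _⟩ = y j i
    have h1 : (j.1 * r + i.1) / r = j.1 := by
      rw [Nat.mul_comm j.1 r, Nat.mul_add_div hr, Nat.div_eq_of_lt i.2, Nat.add_zero]
    have h2 : (j.1 * r + i.1) % r = i.1 := by
      rw [Nat.mul_comm j.1 r, Nat.mul_add_mod, Nat.mod_eq_of_lt i.2]
    congr 1
    · exact Fin.ext h1
    · exact Fin.ext h2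

/-- `#V(f_{r,k}) = (q-1)·q^{k-1}·(q^{r-1} - (q-1)^{r-1})^k + q^{rk-1}`. -/
theorem stmt1 (F : Type) [Field F] [Fintype F] [DecidableEq F] (r k : ℕ)
    (hr : 1 ≤ r) (hk : 1 ≤ k) :
    (Finset.univ.filter (fun x : Fin (r * k) → F => frk F r k x = 0)).card =
      (Fintype.card F - 1) * Fintype.card F ^ (k - 1) *
        (Fintype.card F ^ (r - 1) - (Fintype.card F - 1) ^ (r - 1)) ^ k +
      Fintype.card F ^ (r * k - 1) := by
  obtain ⟨r', rfl⟩ : ∃ r', r = r' + 1 := ⟨r - 1, by omega⟩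
  obtain ⟨k', rfl⟩ : ∃ k', k = k' + 1 := ⟨k - 1, by omega⟩
  have hq : 1 ≤ Fintype.card F := Fintype.card_pos
  have hle : (Fintype.card F - 1) ^ r' ≤ Fintype.card F ^ r' :=
    Nat.pow_le_pow_left (Nat.sub_le _ _) _
  have hcard : (Finset.univ.filter
      (fun x : Fin ((r' + 1) * (k' + 1)) → F => frk F (r' + 1) (k' + 1) x = 0)).card =
      cnt F (r' + 1) (k' + 1) 0 := by
    rw [cnt, ← card_filter_equiv (blockEquiv F (r' + 1) (k' + 1) (Nat.succ_pos r'))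
      (fun y : Fin (k' + 1) → Fin (r' + 1) → F => (∑ j, ∏ i, y j i) = 0)]
    apply congrArg
    apply Finset.filter_congr
    intro x _
    rw [frk]
    exact Iff.rfl
  rw [hcard]
  have hQ0 : (Fintype.card F : ℤ) ≠ 0 := by
    have h0 : (0 : ℤ) < (Fintype.card F : ℤ) := by exact_mod_cast hq
    exact h0.ne'
  apply @Nat.cast_injective ℤ _ _
  push_cast [Nat.cast_sub hq, Nat.cast_sub hle]
  apply mul_left_cancel₀ hQ0
  rw [cnt_key r' (k' + 1)]
  have hm : (r' + 1) * (k' + 1) - 1 + 1 = (r' + 1) * (k' + 1) :=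
    Nat.succ_pred_eq_of_pos (Nat.mul_pos (Nat.succ_pos r') (Nat.succ_pos k'))
  have hpow : ((Fintype.card F : ℤ) ^ (r' + 1)) ^ (k' + 1) =
      (Fintype.card F : ℤ) * (Fintype.card F : ℤ) ^ ((r' + 1) * (k' + 1) - 1) := by
    conv_lhs => rw [← pow_mul, ← hm, pow_succ']
  rw [hpow, mul_pow]
  ring
end

section
/- The sets V(f_{r,k}) satisfy the recursion Z(k) = Z(k−1)·(q^r − (q−1)^r) + (q^{(k−1)r} − Z(k−1))·(q−1)^{r−1} for k ≥ 2, where Z(k) denotes the cardinality of V(f_{r,k}). -/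
open Finset

section ProdCount
variable {F : Type*} [Field F] [Fintype F] [DecidableEq F]

theorem card_filter_prod_ne_zero (ι : Type*) [Fintype ι] [DecidableEq ι] :
    #{z : ι → F | ∏ i, z i ≠ 0} = (Fintype.card F - 1) ^ Fintype.card ι := by
  have : ({z : ι → F | ∏ i, z i ≠ 0} : Finset _) = Fintype.piFinset fun _ ↦ univ.erase 0 := by
    ext z
    simp [prod_ne_zero_iff]
  simp [this, card_erase_of_mem]

theorem card_filter_prod_eq_zero (ι : Type*) [Fintype ι] [DecidableEq ι] :
    #{z : ι → F | ∏ i, z i = 0} =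
      Fintype.card F ^ Fintype.card ι - (Fintype.card F - 1) ^ Fintype.card ι := by
  rw [← card_filter_prod_ne_zero ι, ← Fintype.card_fun, ← card_univ,
    ← card_filter_add_card_filter_not (s := univ) (fun z : ι → F ↦ ∏ i, z i = 0)]
  simp

def prodFiberEquiv (n : ℕ) {c : F} (hc : c ≠ 0) :
    {z : Fin (n + 1) → F // ∏ i, z i = c} ≃ {w : Fin n → F // ∏ i, w i ≠ 0} where
  toFun z := ⟨Fin.tail z.1, fun h ↦ hc <| by
    rw [← z.2, Fin.prod_univ_succ]
    exact mul_eq_zero_of_right _ h⟩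
  invFun w := ⟨Fin.cons (c / ∏ i, w.1 i) w.1, by simp [Fin.prod_univ_succ, div_mul_cancel₀ _ w.2]⟩
  left_inv := by
    rintro ⟨z, hz⟩
    rw [Fin.prod_univ_succ] at hz
    refine Subtype.ext ?_
    change Fin.cons _ (Fin.tail z) = z
    conv_rhs => rw [← Fin.cons_self_tail z]
    congr 1
    exact (eq_div_of_mul_eq (fun h ↦ hc (by rw [← hz, h, mul_zero])) hz).symm
  right_inv w := by simp

theorem card_filter_prod_eq (n : ℕ) {c : F} (hc : c ≠ 0) :
    #{z : Fin (n + 1) → F | ∏ i, z i = c} = (Fintype.card F - 1) ^ n := by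
  rw [← Fintype.card_subtype, Fintype.card_congr (prodFiberEquiv n hc), Fintype.card_subtype,
    card_filter_prod_ne_zero, Fintype.card_fin]

theorem card_filter_add_prod_eq_zero {X : Type*} [Fintype X] (f : X → F) (n : ℕ) :
    #{p : X × (Fin (n + 1) → F) | f p.1 + ∏ i, p.2 i = 0} =
      #{x | f x = 0} * (Fintype.card F ^ (n + 1) - (Fintype.card F - 1) ^ (n + 1)) +
        (Fintype.card X - #{x | f x = 0}) * (Fintype.card F - 1) ^ n := by
  have fiber (x : X) : #{z : Fin (n + 1) → F | f x + ∏ i, z i = 0} =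
      if f x = 0 then Fintype.card F ^ (n + 1) - (Fintype.card F - 1) ^ (n + 1)
      else (Fintype.card F - 1) ^ n := by
    simp only [add_eq_zero_iff_eq_neg']
    split_ifs with hx
    · simpa [hx] using card_filter_prod_eq_zero (F := F) (Fin (n + 1))
    · exact card_filter_prod_eq n (neg_ne_zero.mpr hx)
  have compl : #{x | ¬f x = 0} = Fintype.card X - #{x | f x = 0} := by
    rw [← card_univ, ← card_filter_add_card_filter_not (s := univ) (fun x ↦ f x = 0),
      Nat.add_sub_cancel_left]
  calc #{p : X × (Fin (n + 1) → F) | f p.1 + ∏ i, p.2 i = 0}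
      = ∑ x, #{z : Fin (n + 1) → F | f x + ∏ i, z i = 0} := by
        simp only [card_filter, ← univ_product_univ, sum_product]
    _ = _ := by simp only [fiber, sum_ite, sum_const, smul_eq_mul, compl]

end ProdCount

def blockSnocEquiv (F : Type) (r m : ℕ) :
    (Fin (r * m) → F) × (Fin r → F) ≃ (Fin (r * (m + 1)) → F) :=
  (Fin.appendEquiv _ _).trans (Equiv.arrowCongr (finCongr (Nat.mul_succ r m).symm) (.refl F))

theorem frk_blockSnocEquiv (F : Type) [Field F] (r m : ℕ) (y : Fin (r * m) → F) (z : Fin r → F) :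
    frk F r (m + 1) (blockSnocEquiv F r m (y, z)) = frk F r m y + ∏ i, z i := by
  have first (j : Fin m) (i : Fin r) :
      Fin.cast (Nat.mul_succ r m) (mIdx r (m + 1) j.castSucc i) = Fin.castAdd r (mIdx r m j i) :=
    Fin.ext rfl
  have last (i : Fin r) :
      Fin.cast (Nat.mul_succ r m) (mIdx r (m + 1) (Fin.last m) i) = Fin.natAdd (r * m) i :=
    Fin.ext (by simp [mIdx, Nat.mul_comm])
  change ∑ j, ∏ i, Fin.append y z (Fin.cast (Nat.mul_succ r m) (mIdx r (m + 1) j i)) = _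
  simp only [Fin.sum_univ_castSucc, first, last, Fin.append_left, Fin.append_right]
  rfl

/-- recursion `Z(k) = Z(k-1)·(q^r - (q-1)^r) + (q^{(k-1)r} - Z(k-1))·(q-1)^{r-1}`
for `k ≥ 2`, where `Z(m) = #V(f_{r,m})`. -/
theorem stmt2 (F : Type) [Field F] [Fintype F] [DecidableEq F] (r : ℕ) (hr : 1 ≤ r)
    (Z : ℕ → ℕ)
    (hZ : ∀ m, Z m = (Finset.univ.filter (fun x : Fin (r * m) → F => frk F r m x = 0)).card) :
    ∀ k, 2 ≤ k →
      Z k = Z (k - 1) * (Fintype.card F ^ r - (Fintype.card F - 1) ^ r) +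
        (Fintype.card F ^ ((k - 1) * r) - Z (k - 1)) * (Fintype.card F - 1) ^ (r - 1) := by
  intro k hk
  obtain ⟨m, rfl⟩ : ∃ m, k = m + 1 := ⟨k - 1, by omega⟩
  obtain ⟨n, rfl⟩ : ∃ n, r = n + 1 := ⟨r - 1, by omega⟩
  have split : Z (m + 1) = #{p : (Fin ((n + 1) * m) → F) × (Fin (n + 1) → F) |
      frk F (n + 1) m p.1 + ∏ i, p.2 i = 0} := by
    rw [hZ]
    exact (card_equiv (blockSnocEquiv F (n + 1) m) (by simp [frk_blockSnocEquiv])).symm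
  rw [split, card_filter_add_prod_eq_zero, ← hZ, Fintype.card_fun, Fintype.card_fin,
    Nat.add_sub_cancel, Nat.add_sub_cancel, Nat.mul_comm m]
end

section
/- For a prime power q ≥ 2 and integer r ≥ 2 + log_{(1−1/q)}((q−√q)/(q−1)), one has q^{2r−2}(q−1)^2 + q(q−1)^{2r−1} − 2q^r(q−1)^r ≥ 0; equivalently, (q−1)·q·(q^{r−1} − (q−1)^{r−1})^2 + q^{2r−1} − 1 ≥ 2q^{2r−1} − q^{2r−2} − 1. -/
/-- for real `q ≥ 2` and an integer
`r ≥ 2 + log_{1-1/q}((q-√q)/(q-1))`, one has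
`q^{2r-2}(q-1)² + q(q-1)^{2r-1} - 2q^r(q-1)^r ≥ 0`; equivalently,
`(q-1)·q·(q^{r-1} - (q-1)^{r-1})² + q^{2r-1} - 1 ≥ 2q^{2r-1} - q^{2r-2} - 1`. -/
theorem stmt3 (q : ℝ) (hq : 2 ≤ q) (r : ℕ) (hr : 1 ≤ r)
    (h : (r : ℝ) ≥ 2 + Real.logb (1 - 1 / q) ((q - Real.sqrt q) / (q - 1))) :
    q ^ (2 * r - 2) * (q - 1) ^ 2 + q * (q - 1) ^ (2 * r - 1) -
        2 * q ^ r * (q - 1) ^ r ≥ 0 ∧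
    (q - 1) * q * (q ^ (r - 1) - (q - 1) ^ (r - 1)) ^ 2 + q ^ (2 * r - 1) - 1 ≥
        2 * q ^ (2 * r - 1) - q ^ (2 * r - 2) - 1 := by
  obtain ⟨m, rfl⟩ : ∃ m, r = m + 1 := ⟨r - 1, by omega⟩
  have hq0 : (0:ℝ) < q := by linarith
  have hs0 : 0 < Real.sqrt q := Real.sqrt_pos.2 hq0
  have hsq : Real.sqrt q * Real.sqrt q = q := Real.mul_self_sqrt hq0.le
  have hs : Real.sqrt q < q := by nlinarith [hsq, hs0]
  have hb0 : 0 < 1 - 1/q := by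
    have h1 : 1/q ≤ 1/2 := by
      rw [div_le_div_iff₀ hq0 (by norm_num)]; linarith
    linarith
  have hb1 : 1 - 1/q < 1 := by
    have : 0 < 1/q := by positivity
    linarith
  have hx0 : 0 < (q - Real.sqrt q) / (q - 1) := by
    apply div_pos <;> linarith
  have key : (1 - 1/q) ^ ((↑(m+1):ℝ) - 2) ≤ (q - Real.sqrt q) / (q - 1) := by
    calc (1 - 1/q) ^ ((↑(m+1):ℝ) - 2)
        ≤ (1 - 1/q) ^ Real.logb (1 - 1/q) ((q - Real.sqrt q) / (q - 1)) :=
          Real.rpow_le_rpow_of_exponent_ge hb0 hb1.le (by linarith)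
      _ = (q - Real.sqrt q) / (q - 1) := Real.rpow_logb hb0 (by linarith) hx0
  have key2 : (1 - 1/q) ^ (m:ℝ) ≤ 1 - 1/Real.sqrt q := by
    have e : (m:ℝ) = ((↑(m+1):ℝ) - 2) + 1 := by push_cast; ring
    rw [e, Real.rpow_add hb0, Real.rpow_one]
    have h2 : (1 - 1/q) ^ ((↑(m+1):ℝ) - 2) * (1 - 1/q)
        ≤ ((q - Real.sqrt q) / (q - 1)) * (1 - 1/q) :=
      mul_le_mul_of_nonneg_right key hb0.le
    have h3 : ((q - Real.sqrt q) / (q - 1)) * (1 - 1/q) = 1 - 1/Real.sqrt q := by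
      rw [div_mul_eq_mul_div, div_eq_iff (by linarith : q - 1 ≠ 0)]
      field_simp
      nlinarith [hsq]
    linarith [h3 ▸ h2]
  have key3 : ((q-1)/q) ^ m ≤ (Real.sqrt q - 1)/Real.sqrt q := by
    have e1 : (1 - 1/q) = (q-1)/q := by field_simp
    have e2 : 1 - 1/Real.sqrt q = (Real.sqrt q - 1)/Real.sqrt q := by
      field_simp
    rw [e1, e2] at key2
    rw [← Real.rpow_natCast ((q-1)/q) m]
    exact key2
  set A := q ^ m with hA_def
  set B := (q-1) ^ m with hB_def
  have hA : 0 < A := pow_pos hq0 m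
  have hB : 0 ≤ B := pow_nonneg (by linarith) m
  have key4 : B * Real.sqrt q ≤ (Real.sqrt q - 1) * A := by
    rw [div_pow, div_le_div_iff₀ (pow_pos hq0 m) hs0] at key3
    exact key3
  have hAB : A ≤ Real.sqrt q * (A - B) := by nlinarith
  have hE : A ^ 2 ≤ q * (A - B) ^ 2 := by
    have h2 : A * A ≤ (Real.sqrt q * (A - B)) * (Real.sqrt q * (A - B)) :=
      mul_le_mul hAB hAB hA.le (le_trans hA.le hAB)
    nlinarith [h2, hsq]
  have e1 : 2 * (m + 1) - 2 = 2 * m := by omega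
  have e2 : 2 * (m + 1) - 1 = 2 * m + 1 := by omega
  have e3 : (m + 1) - 1 = m := by omega
  have p1 : q ^ (2 * m) = A ^ 2 := by rw [hA_def, ← pow_mul, Nat.mul_comm]
  have p2 : q ^ (2 * m + 1) = q * A ^ 2 := by
    rw [pow_succ, p1, mul_comm]
  have p3 : (q-1) ^ (2 * m + 1) = (q-1) * B ^ 2 := by
    rw [pow_succ, hB_def, ← pow_mul, Nat.mul_comm, mul_comm]
  have p4 : q ^ (m + 1) = q * A := by rw [pow_succ, mul_comm]
  have p5 : (q-1) ^ (m + 1) = (q-1) * B := by rw [pow_succ, mul_comm]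
  have hfac : 0 ≤ (q - 1) * (q * (A - B) ^ 2 - A ^ 2) :=
    mul_nonneg (by linarith) (by linarith)
  rw [e1, e2, e3, p1, p2, p3, p4, p5]
  constructor
  · have g1 : A ^ 2 * (q - 1) ^ 2 + q * ((q - 1) * B ^ 2) -
        2 * (q * A) * ((q - 1) * B) = (q - 1) * (q * (A - B) ^ 2 - A ^ 2) := by
      ring
    linarith [g1 ▸ hfac]
  · have g2 : (q - 1) * q * (A - B) ^ 2 + q * A ^ 2 - 1 -
        (2 * (q * A ^ 2) - A ^ 2 - 1) = (q - 1) * (q * (A - B) ^ 2 - A ^ 2) := by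
      ring
    linarith [hfac, g2]
end

section
/- A linear code C over F_q is minimal if and only if for every pair of linearly independent codewords c, c' ∈ C, one has Σ_{a ∈ F_q^*} wt(c' − a·c) ≠ (q−1)·wt(c') − wt(c). -/
/-!
Count coordinatewise: for `x = c i`, `y = c' i`, the number of `a ∈ F*` with `y ≠ a x` is
`(q - 1)[y ≠ 0] - [x ≠ 0]`, plus an excess of `q` exactly when `x ≠ 0 = y`. Summing over `i`,
the identity `Σ_{a ≠ 0} wt(c' - a c) = (q - 1) wt(c') - wt(c)` holds iff `supp c ⊆ supp c'`.
So the criterion says that no codeword has its support inside that of an independent one,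
which is minimality.
-/

open Finset

theorem natCast_hammingNorm {ι R : Type*} [Fintype ι] [Zero R] [DecidableEq R] (v : ι → R) :
    (hammingNorm v : ℤ) = ∑ i, if v i ≠ 0 then 1 else 0 :=
  natCast_card_filter _ _

variable {F : Type*} [Field F] [Fintype F] [DecidableEq F]

theorem sum_units_ite_sub_mul_ne_zero (x y : F) :
    ∑ a ∈ univ \ {0}, (if y - a * x ≠ 0 then 1 else 0 : ℤ) =
      (Fintype.card F - 1) * (if y ≠ 0 then 1 else 0) - (if x ≠ 0 then 1 else 0)
        + Fintype.card F * (if x ≠ 0 ∧ y = 0 then 1 else 0) := by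
  have hcard : (#(univ \ {0} : Finset F) : ℤ) = Fintype.card F - 1 := by
    rw [card_sdiff_of_subset (subset_univ _), card_singleton, card_univ,
      Nat.cast_sub Fintype.card_pos, Nat.cast_one]
  by_cases hx : x = 0
  · subst hx
    by_cases hy : y = 0 <;> simp [hy, hcard]
  · have hroot (a : F) : y - a * x ≠ 0 ↔ a ≠ y / x := by
      rw [ne_eq, ne_eq, sub_eq_zero, eq_div_iff hx, eq_comm]
    simp_rw [hroot, sum_boole, filter_ne']
    by_cases hy : y = 0
    · simp [hx, hy, hcard]
      ring
    · rw [cast_card_erase_of_mem (by simp [hx, hy]), hcard]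
      simp [hx, hy]

theorem sum_hammingNorm_sub_smul {ι : Type*} [Fintype ι] (c c' : ι → F) :
    ∑ a ∈ (univ : Finset F) \ {0}, (hammingNorm (c' - a • c) : ℤ) =
      (Fintype.card F - 1) * hammingNorm c' - hammingNorm c
        + Fintype.card F * (#{i | c i ≠ 0 ∧ c' i = 0} : ℤ) := by
  simp_rw [natCast_hammingNorm, natCast_card_filter, Pi.sub_apply, Pi.smul_apply, smul_eq_mul]
  rw [sum_comm]
  simp_rw [sum_units_ite_sub_mul_ne_zero, sum_add_distrib, sum_sub_distrib, mul_sum]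

theorem sum_hammingNorm_sub_smul_eq_iff {ι : Type*} [Fintype ι] (c c' : ι → F) :
    ∑ a ∈ (univ : Finset F) \ {0}, (hammingNorm (c' - a • c) : ℤ) =
        (Fintype.card F - 1) * hammingNorm c' - hammingNorm c ↔
      ∀ i, c i ≠ 0 → c' i ≠ 0 := by
  rw [sum_hammingNorm_sub_smul, add_eq_left, mul_eq_zero]
  simp [Fintype.card_ne_zero, filter_eq_empty_iff]

/-- a linear code `C ⊆ F_q^n` is minimal (every nonzero codeword `c`
covers only scalar multiples of itself) if and only if for every pair of linearly
independent codewords `c, c' ∈ C` one has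
`Σ_{a ∈ F_q^*} wt(c' - a·c) ≠ (q-1)·wt(c') - wt(c)`. -/
theorem stmt5 (F : Type) [Field F] [Fintype F] [DecidableEq F] (n : ℕ)
    (C : Submodule F (Fin n → F)) :
    (∀ c ∈ C, c ≠ 0 → ∀ c' ∈ C,
        (∀ i, c' i ≠ 0 → c i ≠ 0) → ∃ lam : F, c' = lam • c) ↔
    (∀ c ∈ C, ∀ c' ∈ C, LinearIndependent F ![c, c'] →
        (∑ a ∈ (Finset.univ : Finset F) \ {0}, (hammingNorm (c' - a • c) : ℤ)) ≠
          ((Fintype.card F : ℤ) - 1) * (hammingNorm c' : ℤ) - (hammingNorm c : ℤ)) := by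
  simp_rw [ne_eq, sum_hammingNorm_sub_smul_eq_iff]
  constructor
  · intro hmin c hc c' hc' hind hsupp
    have hc'0 : c' ≠ 0 := hind.ne_zero 1
    obtain ⟨lam, rfl⟩ := hmin c' hc' hc'0 c hc hsupp
    exact (LinearIndependent.pair_iff' hc'0).mp (LinearIndependent.pair_symm_iff.mp hind) lam rfl
  · intro hind c hc hc0 c' hc' hsupp
    by_contra! hne
    have hindep : LinearIndependent F ![c, c'] :=
      (LinearIndependent.pair_iff' hc0).mpr fun a h => hne a h.symm
    exact hind c' hc' c hc (LinearIndependent.pair_symm_iff.mp hindep) hsupp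
end

section
/- If a linear code C over F_q satisfies w_max/w_min < q/(q−1), where w_min and w_max are the minimum and maximum nonzero Hamming weights of C, then C is minimal. -/
/-- Ashikhmin–Barg: if a linear code `C ⊆ F_q^n` satisfies
`w_max / w_min < q/(q-1)`, where `w_min` and `w_max` are the minimum and maximum
nonzero Hamming weights of `C`, then `C` is minimal: for every nonzero `c ∈ C`,
any nonzero `c' ∈ C` with `supp(c') ⊆ supp(c)` equals `λ•c` for some `λ ∈ F_q^*`. -/
theorem stmt6 (F : Type) [Field F] [Fintype F] [DecidableEq F] (n : ℕ)
    (C : Submodule F (Fin n → F)) (wmin wmax : ℕ)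
    (hmin : ∀ c ∈ C, c ≠ 0 → wmin ≤ hammingNorm c)
    (hmax : ∀ c ∈ C, c ≠ 0 → hammingNorm c ≤ wmax)
    (hminex : ∃ c ∈ C, c ≠ 0 ∧ hammingNorm c = wmin)
    (hmaxex : ∃ c ∈ C, c ≠ 0 ∧ hammingNorm c = wmax)
    (hAB : (wmax : ℝ) / (wmin : ℝ) < (Fintype.card F : ℝ) / ((Fintype.card F : ℝ) - 1)) :
    ∀ c ∈ C, c ≠ 0 → ∀ c' ∈ C, c' ≠ 0 →
      (∀ i, c' i ≠ 0 → c i ≠ 0) → ∃ lam : F, lam ≠ 0 ∧ c' = lam • c := by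
  intro c hc hc0 c' hc' hc'0 hsupp
  by_contra hcon
  push_neg at hcon
  set q := Fintype.card F with hqdef
  have hq2 : 2 ≤ q := Fintype.one_lt_card
  have hwmin : 0 < wmin := by
    obtain ⟨c₀, _, h0, he⟩ := hminex
    rw [← he]
    exact Nat.pos_of_ne_zero (fun hz => h0 (hammingNorm_eq_zero.mp hz))
  have hnz : ∀ a : F, c' - a • c ≠ 0 := by
    intro a hzero
    have heq : c' = a • c := by rwa [sub_eq_zero] at hzero
    by_cases ha : a = 0
    · subst ha; simp only [zero_smul] at heq; exact hc'0 heq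
    · exact hcon a ha heq
  have hmem : ∀ a : F, c' - a • c ∈ C := fun a => C.sub_mem hc' (C.smul_mem a hc)
  have key : ∑ a : F, hammingNorm (c' - a • c) = (q - 1) * hammingNorm c := by
    calc ∑ a : F, hammingNorm (c' - a • c)
        = ∑ a : F, ∑ i : Fin n, if c' i - a * c i ≠ 0 then 1 else 0 := by
          refine Finset.sum_congr rfl fun a _ => ?_
          rw [hammingNorm, Finset.card_filter]
          exact Finset.sum_congr rfl fun i _ => by
            simp [Pi.sub_apply, Pi.smul_apply, smul_eq_mul]
      _ = ∑ i : Fin n, ∑ a : F, if c' i - a * c i ≠ 0 then 1 else 0 :=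
          Finset.sum_comm
      _ = ∑ i : Fin n, if c i ≠ 0 then (q - 1) else 0 := by
          refine Finset.sum_congr rfl fun i _ => ?_
          by_cases hci : c i = 0
          · have hc'i : c' i = 0 := by
              by_contra hx; exact (hsupp i hx) hci
            simp [hci, hc'i]
          · rw [if_pos hci]
            rw [← Finset.card_filter]
            have hcompl : Finset.univ.filter (fun a : F => ¬ (c' i - a * c i ≠ 0))
                = {c' i * (c i)⁻¹} := by
              ext a
              simp only [Finset.mem_filter, Finset.mem_univ, true_and, not_not,
                Finset.mem_singleton, sub_eq_zero]
              constructor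
              · intro h
                rw [h, mul_inv_cancel_right₀ hci]
              · intro h
                rw [h, inv_mul_cancel_right₀ hci]
            have htot := Finset.card_filter_add_card_filter_not
              (s := (Finset.univ : Finset F)) (p := fun a : F => c' i - a * c i ≠ 0)
            rw [hcompl, Finset.card_singleton, Finset.card_univ, ← hqdef] at htot
            omega
      _ = (q - 1) * hammingNorm c := by
          rw [hammingNorm, Finset.card_filter, Finset.mul_sum]
          exact Finset.sum_congr rfl fun i _ => by by_cases h : c i = 0 <;> simp [h]
  have lower : q * wmin ≤ ∑ a : F, hammingNorm (c' - a • c) := by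
    calc q * wmin = ∑ _a : F, wmin := by
          rw [Finset.sum_const, Finset.card_univ, smul_eq_mul]
      _ ≤ ∑ a : F, hammingNorm (c' - a • c) :=
          Finset.sum_le_sum fun a _ => hmin _ (hmem a) (hnz a)
  have upper : (q - 1) * hammingNorm c ≤ (q - 1) * wmax :=
    Nat.mul_le_mul_left _ (hmax c hc hc0)
  have hnat : q * wmin ≤ (q - 1) * wmax := le_trans (key ▸ lower) upper
  -- derive contradiction from hAB
  have hq1R : (1 : ℝ) < (q : ℝ) := by exact_mod_cast lt_of_lt_of_le one_lt_two hq2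
  have hwminR : (0 : ℝ) < (wmin : ℝ) := by exact_mod_cast hwmin
  have hcross : (wmax : ℝ) * ((q : ℝ) - 1) < (q : ℝ) * (wmin : ℝ) :=
    (div_lt_div_iff₀ hwminR (by linarith)).mp hAB
  have hcast : ((q - 1 : ℕ) : ℝ) = (q : ℝ) - 1 := by
    have : (1 : ℕ) ≤ q := by omega
    push_cast [Nat.cast_sub this]; ring
  have hR : ((q : ℝ)) * (wmin : ℝ) ≤ ((q : ℝ) - 1) * (wmax : ℝ) := by
    have := (Nat.cast_le (α := ℝ)).mpr hnat
    push_cast at this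
    rwa [hcast] at this
  linarith
end

section
/- If #V(f)* ≥ 2q^{n−1} − q^{n−2} − 1, then the code C_f satisfies w_max/w_min ≥ q/(q−1), i.e., C_f does not satisfy the Ashikhmin–Barg condition. -/
/-- The generating map of the code `C_f`: the pair `(u, v)` is sent to the word
`c(u,v) = (u·f(x) + v·x)_{x ∈ F_q^n \ {0}}`. -/
def cfWord (F : Type) [Field F] (n : ℕ) (f : (Fin n → F) → F)
    (p : F × (Fin n → F)) : {x : Fin n → F // x ≠ 0} → F :=
  fun x => p.1 * f x.1 + ∑ i, p.2 i * x.1 i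

lemma cardPiNe (F : Type) [Field F] [Fintype F] [DecidableEq F] (n : ℕ) (i0 : Fin n) :
    Fintype.card {x : Fin n → F // x i0 ≠ 0} =
      (Fintype.card F - 1) * Fintype.card F ^ (n - 1) := by
  have e1 : {x : Fin n → F // x i0 ≠ 0} ≃ {p : F × ({j : Fin n // j ≠ i0} → F) // p.1 ≠ 0} :=
    (Equiv.funSplitAt i0 F).subtypeEquiv (fun x => by simp)
  have e2 : {p : F × ({j : Fin n // j ≠ i0} → F) // p.1 ≠ 0} ≃
      {a : F // a ≠ 0} × ({j : Fin n // j ≠ i0} → F) :=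
    Equiv.prodSubtypeFstEquivSubtypeProd (p := fun a : F => a ≠ 0)
  rw [Fintype.card_congr (e1.trans e2), Fintype.card_prod, Fintype.card_fun]
  congr 1
  · simp [Fintype.card_subtype_compl]
  · congr 1
    simp [Fintype.card_subtype_compl]


/-- if `#V(f)* ≥ 2q^{n-1} - q^{n-2} - 1` (with `f` non-linear and
`V(f)* ≠ F_q^n \ {0}`), then `C_f` satisfies `w_max / w_min ≥ q/(q-1)`, i.e. it does
not satisfy the Ashikhmin–Barg condition.  Here `wmin` and `wmax` are the minimum and
maximum nonzero Hamming weights of `C_f`. -/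
theorem stmt9 (F : Type) [Field F] [Fintype F] [DecidableEq F] (n : ℕ) (hn : 2 ≤ n)
    (f : (Fin n → F) → F) (hnl : ¬ IsLinearMap F f)
    (hV : {x : Fin n → F | x ≠ 0 ∧ f x = 0} ≠ {x : Fin n → F | x ≠ 0})
    (hcard : (Finset.univ.filter (fun x : Fin n → F => x ≠ 0 ∧ f x = 0)).card ≥
      2 * Fintype.card F ^ (n - 1) - Fintype.card F ^ (n - 2) - 1)
    (wmin wmax : ℕ)
    (hmin : ∀ c ∈ Set.range (cfWord F n f), c ≠ 0 → wmin ≤ hammingNorm c)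
    (hmax : ∀ c ∈ Set.range (cfWord F n f), c ≠ 0 → hammingNorm c ≤ wmax)
    (hminex : ∃ c ∈ Set.range (cfWord F n f), c ≠ 0 ∧ hammingNorm c = wmin)
    (hmaxex : ∃ c ∈ Set.range (cfWord F n f), c ≠ 0 ∧ hammingNorm c = wmax) :
    (wmax : ℝ) / (wmin : ℝ) ≥ (Fintype.card F : ℝ) / ((Fintype.card F : ℝ) - 1) := by

  classical
  set q := Fintype.card F with hqdef
  have hq : 2 ≤ q := Fintype.one_lt_card
  have i0 : Fin n := ⟨0, by omega⟩
  -- the codeword c(0, e_{i0})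
  have hc2 : cfWord F n f (0, (Pi.single i0 1 : Fin n → F)) = fun x => x.1 i0 := by
    funext x
    simp [cfWord, Pi.single_apply, ite_mul]
  have hx1 : (Pi.single i0 1 : Fin n → F) ≠ 0 := by
    intro h
    have := congrFun h i0
    simp at this
  have hc2ne : cfWord F n f (0, (Pi.single i0 1 : Fin n → F)) ≠ 0 := by
    intro h
    have := congrFun h ⟨Pi.single i0 1, hx1⟩
    rw [hc2] at this
    simp at this
  have hc2norm : hammingNorm (cfWord F n f (0, (Pi.single i0 1 : Fin n → F))) = (q - 1) * q ^ (n - 1) := by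
    rw [hc2, ← cardPiNe F n i0]
    rw [hammingNorm, ← Fintype.card_subtype]
    exact Fintype.card_congr
      { toFun := fun x => ⟨x.1.1, x.2⟩
        invFun := fun x => ⟨⟨x.1, fun h => x.2 (by simp [h])⟩, x.2⟩
        left_inv := fun _ => rfl
        right_inv := fun _ => rfl }
  -- the codeword c(1, 0)
  have hc1 : cfWord F n f (1, 0) = fun x => f x.1 := by
    funext x
    simp [cfWord]
  obtain ⟨x0, hx0, hfx0⟩ : ∃ x : Fin n → F, x ≠ 0 ∧ f x ≠ 0 := by
    by_contra h
    push_neg at h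
    apply hV
    ext x
    exact ⟨fun hx => hx.1, fun hx => ⟨hx, h x hx⟩⟩
  have hc1ne : cfWord F n f (1, 0) ≠ 0 := by
    intro h
    have := congrFun h ⟨x0, hx0⟩
    rw [hc1] at this
    exact hfx0 this
  set A := (Finset.univ.filter (fun x : Fin n → F => x ≠ 0 ∧ f x = 0)).card with hA
  set B := (Finset.univ.filter (fun x : Fin n → F => x ≠ 0 ∧ f x ≠ 0)).card with hB
  have hc1norm : hammingNorm (cfWord F n f (1, 0)) = B := by
    rw [hc1, hammingNorm, ← Fintype.card_subtype, hB, ← Fintype.card_subtype]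
    exact Fintype.card_congr
      { toFun := fun x => ⟨x.1.1, x.1.2, x.2⟩
        invFun := fun x => ⟨⟨x.1, x.2.1⟩, x.2.2⟩
        left_inv := fun _ => rfl
        right_inv := fun _ => rfl }
  have hABsum : A + B = q ^ n - 1 := by
    have h1 : (Finset.univ.filter (fun x : Fin n → F => x ≠ 0)).card = q ^ n - 1 := by
      rw [Finset.filter_ne', Finset.card_erase_of_mem (Finset.mem_univ _), Finset.card_univ,
        Fintype.card_fun, Fintype.card_fin]
    rw [← h1]
    have e1 : Finset.univ.filter (fun x : Fin n → F => x ≠ 0 ∧ f x = 0) =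
        (Finset.univ.filter (fun x : Fin n → F => x ≠ 0)).filter (fun x => f x = 0) := by
      rw [Finset.filter_filter]
    have e2 : Finset.univ.filter (fun x : Fin n → F => x ≠ 0 ∧ f x ≠ 0) =
        (Finset.univ.filter (fun x : Fin n → F => x ≠ 0)).filter (fun x => ¬ f x = 0) := by
      rw [Finset.filter_filter]
    rw [hA, hB, e1, e2, Finset.card_filter_add_card_filter_not]
  -- bounds
  have hwmax : (q - 1) * q ^ (n - 1) ≤ wmax := by
    have := hmax _ ⟨(0, (Pi.single i0 1 : Fin n → F)), rfl⟩ hc2ne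
    rwa [hc2norm] at this
  have hwmin : wmin ≤ B := by
    have := hmin _ ⟨(1, 0), rfl⟩ hc1ne
    rwa [hc1norm] at this
  have hwmin1 : 1 ≤ wmin := by
    obtain ⟨c, hc, hcne, hceq⟩ := hminex
    rw [← hceq]
    exact Nat.one_le_iff_ne_zero.mpr (fun h => hcne (hammingNorm_eq_zero.mp h))
  -- arithmetic
  have hn1 : n - 1 = (n - 2) + 1 := by omega
  have hn0 : n = (n - 2) + 2 := by omega
  set p2 := q ^ (n - 2) with hp2
  have hp1 : q ^ (n - 1) = q * p2 := by rw [hn1]; ring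
  have hpn : q ^ n = q * (q * p2) := by rw [hn0]; ring
  have hp2pos : 1 ≤ p2 := Nat.one_le_pow _ _ (by omega)
  -- cast to ℝ
  have hqR : (2 : ℝ) ≤ (q : ℝ) := by exact_mod_cast hq
  have hwminR : (1 : ℝ) ≤ (wmin : ℝ) := by exact_mod_cast hwmin1
  rw [ge_iff_le, div_le_div_iff₀ (by linarith) (by linarith)]
  -- ℕ facts to ℝ
  have f1 : ((A : ℝ) + p2 + 1) ≥ 2 * (q * p2) := by
    have : A + p2 + 1 ≥ 2 * (q * p2) := by
      have := hcard
      rw [hp1] at this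
      omega
    exact_mod_cast this
  have f2 : (A : ℝ) + B + 1 = q * (q * p2) := by
    have : A + B + 1 = q * (q * p2) := by
      rw [hABsum, ← hpn]
      have : 1 ≤ q ^ n := Nat.one_le_pow _ _ (by omega)
      omega
    exact_mod_cast this
  have f3 : ((q : ℝ) - 1) * (q * p2) ≤ wmax := by
    have : ((q : ℝ) - 1) * (q ^ (n-1) : ℕ) ≤ wmax := by
      have h1 : ((q - 1 : ℕ) : ℝ) * ((q ^ (n-1) : ℕ) : ℝ) ≤ (wmax : ℝ) := by
        exact_mod_cast hwmax
      have h2 : ((q - 1 : ℕ) : ℝ) = (q : ℝ) - 1 := by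
        have : 1 ≤ q := by omega
        push_cast [this]
        ring
      linarith [h1, h2 ▸ h1]
    have hcast : ((q ^ (n-1) : ℕ) : ℝ) = (q : ℝ) * p2 := by
      rw [hp1]; push_cast; ring
    rwa [hcast] at this
  have f4 : (wmin : ℝ) ≤ B := by exact_mod_cast hwmin
  have hp2R : (1 : ℝ) ≤ (p2 : ℝ) := by exact_mod_cast hp2pos
  nlinarith [mul_le_mul_of_nonneg_left f4 (by linarith : (0:ℝ) ≤ (q:ℝ)),
    mul_le_mul_of_nonneg_left f1 (by linarith : (0:ℝ) ≤ (q:ℝ)),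
    mul_le_mul_of_nonneg_right f3 (by linarith : (0:ℝ) ≤ (q:ℝ) - 1),
    f2]
end

section
/- Suppose: (a) the span of V(f)* is all of F_q^n, V(f)* contains no punctured hyperplane H(v)* = H(v) \ {0}, and for every pair of distinct hyperplanes H(v), H(v') through the origin, V(f)* ∩ H(v) is not contained in H(v'); and (b) for every nonzero v ∈ F_q^n there exists x with f(x) + v·x = 0 and f(x) ≠ 0. Then the code C_f = {(u·f(x) + v·x)_{x ≠ 0} : u ∈ F_q, v ∈ F_q^n} is a minimal linear code of length q^n − 1 and dimension n + 1. -/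
/-!
The map `(u, v) ↦ c(u, v)` is linear and injective: if `c(u, v) = 0` then `v` is orthogonal to
the spanning set `V(f)*`, so `v = 0`, and then `u = 0` because by (a) `f` does not vanish on all
of `F^n \ {0}`. For minimality, let the zeros of `c = c(u, v) ≠ 0` lie among those of
`c' = c(u', v')`. If `u ≠ 0`, put `w = u v' - u' v`; then `w·x = u c'(x) - u' c(x)`, so `H(w)`
contains the zeros of `c`. For `v = 0` these are `V(f)*`, which spans; otherwise they contain
`V(f)* ∩ H(v)`, so by (a) either `w = 0` or `H(w) = H(v)`, and the latter is impossible because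
the point given by (b) for `v / u` is a zero of `c` outside `H(v)`. Hence `u v' = u' v`.
If `u = 0`, the zeros of `c` form `H(v) \ {0}`, which by (a) contains a point outside `V(f)*`;
this rules out `u' ≠ 0`, and then `H(v) ⊆ H(v')` makes `v'` a multiple of `v`.
-/

namespace MinimalCode

open Submodule

variable {F ι : Type*} [Field F] [Fintype ι]

def hyperplane (v : ι → F) : Set (ι → F) := {x | v ⬝ᵥ x = 0}

@[simp]
theorem mem_hyperplane {v x : ι → F} : x ∈ hyperplane v ↔ v ⬝ᵥ x = 0 :=
  Iff.rfl

def puncturedZeroSet (f : (ι → F) → F) : Set (ι → F) := {x | x ≠ 0 ∧ f x = 0}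

def codeZeros (f : (ι → F) → F) (p : F × (ι → F)) : Set (ι → F) :=
  {x | x ≠ 0 ∧ p.1 * f x + p.2 ⬝ᵥ x = 0}

theorem eq_zero_of_subset_hyperplane_of_span_eq_top {S : Set (ι → F)} (hS : span F S = ⊤)
    {v : ι → F} (hv : S ⊆ hyperplane v) : v = 0 := by
  have : dotProductBilin F F v = 0 := LinearMap.ext_on hS hv
  exact dotProduct_eq_zero v fun x => LinearMap.congr_fun this x

theorem exists_eq_smul_of_hyperplane_subset [DecidableEq ι] {v w : ι → F}
    (h : hyperplane v ⊆ hyperplane w) : ∃ c : F, w = c • v := by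
  let e := dotProductEquiv F ι
  have hmem : e w ∈ span F (Set.range fun _ : Unit => e v) :=
    mem_span_of_iInf_ker_le_ker fun x hx => h (by simpa [e] using hx)
  obtain ⟨c, hc⟩ := mem_span_singleton.mp (by simpa using hmem)
  exact ⟨c, e.injective (by simp [hc])⟩

variable {f : (ι → F) → F}

theorem exists_ne_zero_apply_ne_zero [Nonempty ι]
    (hhyp : ∀ v : ι → F, v ≠ 0 → ¬ hyperplane v \ {0} ⊆ puncturedZeroSet f) :
    ∃ x, x ≠ 0 ∧ f x ≠ 0 := by
  obtain ⟨v, hv⟩ := exists_ne (0 : ι → F)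
  obtain ⟨x, ⟨-, hx0⟩, hfx⟩ := Set.not_subset.mp (hhyp v hv)
  exact ⟨x, hx0, fun h => hfx ⟨hx0, h⟩⟩

theorem eq_zero_of_forall_codeword_eq_zero [Nonempty ι]
    (hspan : span F (puncturedZeroSet f) = ⊤)
    (hhyp : ∀ v : ι → F, v ≠ 0 → ¬ hyperplane v \ {0} ⊆ puncturedZeroSet f)
    {p : F × (ι → F)} (hp : ∀ x, x ≠ 0 → p.1 * f x + p.2 ⬝ᵥ x = 0) : p = 0 := by
  obtain ⟨u, v⟩ := p
  have hv : v = 0 := eq_zero_of_subset_hyperplane_of_span_eq_top hspan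
    fun x ⟨hx0, hfx⟩ => mem_hyperplane.2 (by simpa [hfx] using hp x hx0)
  obtain ⟨x, hx0, hfx⟩ := exists_ne_zero_apply_ne_zero hhyp
  have hu : u = 0 := by simpa [hv, hfx] using hp x hx0
  simp [hu, hv]

theorem eq_zero_of_codeZeros_subset_hyperplane (hspan : span F (puncturedZeroSet f) = ⊤)
    (hslice : ∀ v v' : ι → F, v ≠ 0 → v' ≠ 0 → hyperplane v ≠ hyperplane v' →
      ¬ puncturedZeroSet f ∩ hyperplane v ⊆ hyperplane v')
    (hb : ∀ v : ι → F, v ≠ 0 → ∃ x, f x + v ⬝ᵥ x = 0 ∧ f x ≠ 0)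
    {u : F} (hu : u ≠ 0) {v w : ι → F} (hw : codeZeros f (u, v) ⊆ hyperplane w) :
    w = 0 := by
  by_cases hv : v = 0
  · exact eq_zero_of_subset_hyperplane_of_span_eq_top hspan
      fun x ⟨hx0, hfx⟩ => hw ⟨hx0, by simp [hfx, hv]⟩
  by_contra hw0
  have hvw : hyperplane v = hyperplane w := by
    by_contra hne
    exact hslice v w hv hw0 hne fun x ⟨⟨hx0, hfx⟩, hxv⟩ => hw ⟨hx0, by simp_all⟩
  obtain ⟨x, hx, hfx⟩ := hb (u⁻¹ • v) (by simpa [hu] using hv)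
  have hcx : u * f x + v ⬝ᵥ x = 0 := by
    rw [smul_dotProduct, smul_eq_mul] at hx
    linear_combination u * hx - v ⬝ᵥ x * mul_inv_cancel₀ hu
  have hx0 : x ≠ 0 := by rintro rfl; simp_all
  have hxv : x ∈ hyperplane v := hvw ▸ hw ⟨hx0, hcx⟩
  exact hfx (by simpa [mem_hyperplane.1 hxv, hu] using hcx)

theorem fst_eq_zero_of_codeZeros_subset
    (hhyp : ∀ v : ι → F, v ≠ 0 → ¬ hyperplane v \ {0} ⊆ puncturedZeroSet f)
    (hslice : ∀ v v' : ι → F, v ≠ 0 → v' ≠ 0 → hyperplane v ≠ hyperplane v' →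
      ¬ puncturedZeroSet f ∩ hyperplane v ⊆ hyperplane v')
    {v : ι → F} (hv : v ≠ 0) {p : F × (ι → F)} (h : codeZeros f (0, v) ⊆ codeZeros f p) :
    p.1 = 0 := by
  obtain ⟨u, w⟩ := p
  by_contra hu
  have hzeros : ∀ x ∈ hyperplane v, x ≠ 0 → u * f x + w ⬝ᵥ x = 0 :=
    fun x hxv hx0 => (h ⟨hx0, by simpa using hxv⟩).2
  obtain ⟨x, ⟨hxv, hx0⟩, hfx⟩ := Set.not_subset.mp (hhyp v hv)
  have hxw : w ⬝ᵥ x ≠ 0 := fun hwx =>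
    hfx ⟨hx0, by simpa [hwx, hu] using hzeros x hxv hx0⟩
  refine hslice v w hv (by rintro rfl; simp at hxw)
    (fun he => hxw (mem_hyperplane.1 (he ▸ hxv))) ?_
  rintro y ⟨⟨hy0, hfy⟩, hyv⟩
  rw [mem_hyperplane]
  simpa [hfy] using hzeros y hyv hy0

theorem exists_eq_smul_of_codeZeros_subset [DecidableEq ι]
    (hspan : span F (puncturedZeroSet f) = ⊤)
    (hhyp : ∀ v : ι → F, v ≠ 0 → ¬ hyperplane v \ {0} ⊆ puncturedZeroSet f)
    (hslice : ∀ v v' : ι → F, v ≠ 0 → v' ≠ 0 → hyperplane v ≠ hyperplane v' →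
      ¬ puncturedZeroSet f ∩ hyperplane v ⊆ hyperplane v')
    (hb : ∀ v : ι → F, v ≠ 0 → ∃ x, f x + v ⬝ᵥ x = 0 ∧ f x ≠ 0)
    {p p' : F × (ι → F)} (hp : p ≠ 0) (h : codeZeros f p ⊆ codeZeros f p') :
    ∃ c : F, p' = c • p := by
  obtain ⟨u, v⟩ := p
  obtain ⟨u', v'⟩ := p'
  by_cases hu : u = 0
  · subst hu
    have hv : v ≠ 0 := by simpa using hp
    obtain rfl : u' = 0 := fst_eq_zero_of_codeZeros_subset hhyp hslice hv h
    obtain ⟨c, rfl⟩ : ∃ c : F, v' = c • v := exists_eq_smul_of_hyperplane_subset fun x hx => by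
      rcases eq_or_ne x 0 with rfl | hx0
      · simp
      · simpa using (h ⟨hx0, by simpa using hx⟩).2
    exact ⟨c, by simp⟩
  have hw : u • v' - u' • v = 0 := by
    refine eq_zero_of_codeZeros_subset_hyperplane hspan hslice hb hu (v := v) fun x hx => ?_
    have hc : u * f x + v ⬝ᵥ x = 0 := hx.2
    have hc' : u' * f x + v' ⬝ᵥ x = 0 := (h hx).2
    rw [mem_hyperplane, sub_dotProduct, smul_dotProduct, smul_dotProduct, smul_eq_mul,
      smul_eq_mul]
    linear_combination u * hc' - u' * hc
  refine ⟨u' / u, Prod.ext (by simp [hu]) (funext fun i => ?_)⟩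
  have hi := congrFun hw i
  simp only [Pi.sub_apply, Pi.smul_apply, smul_eq_mul, Pi.zero_apply] at hi
  simp only [Prod.smul_snd, Pi.smul_apply, smul_eq_mul]
  rw [div_mul_eq_mul_div, eq_div_iff hu]
  linear_combination hi

section Code

variable (F : Type) [Field F]

def cfWordLinearMap (n : ℕ) (f : (Fin n → F) → F) :
    F × (Fin n → F) →ₗ[F] ({x : Fin n → F // x ≠ 0} → F) where
  toFun := cfWord F n f
  map_add' p q := by
    ext x
    simp only [cfWord, Prod.fst_add, Prod.snd_add, Pi.add_apply, add_mul, Finset.sum_add_distrib]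
    ring
  map_smul' c p := by
    ext x
    simp only [cfWord, Prod.smul_fst, Prod.smul_snd, Pi.smul_apply, smul_eq_mul,
      RingHom.id_apply, mul_add, Finset.mul_sum, mul_assoc]

@[simp]
theorem coe_cfWordLinearMap (n : ℕ) (f : (Fin n → F) → F) :
    ⇑(cfWordLinearMap F n f) = cfWord F n f :=
  rfl

end Code

end MinimalCode

open MinimalCode in
/-- main theorem: suppose
(a) `V(f)*` spans `F_q^n`, contains no punctured hyperplane `H(v) \ {0}`, and its
intersection with any hyperplane `H(v)` is not contained in a different hyperplane
`H(v')`; and (b) for every nonzero `v` there exists `x` with `f(x) + v·x = 0` and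
`f(x) ≠ 0`.  Then `C_f` is a minimal linear code of length `q^n - 1` and
dimension `n + 1`. -/
theorem stmt11 (F : Type) [Field F] [Fintype F] [DecidableEq F] (n : ℕ) (hn : 2 ≤ n)
    (f : (Fin n → F) → F)
    (ha1 : Submodule.span F {x : Fin n → F | x ≠ 0 ∧ f x = 0} = ⊤)
    (ha2 : ∀ v : Fin n → F, v ≠ 0 →
      ¬ ({x : Fin n → F | ∑ i, v i * x i = 0} \ {0} ⊆ {x : Fin n → F | x ≠ 0 ∧ f x = 0}))
    (ha3 : ∀ v v' : Fin n → F, v ≠ 0 → v' ≠ 0 →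
      {x : Fin n → F | ∑ i, v i * x i = 0} ≠ {x : Fin n → F | ∑ i, v' i * x i = 0} →
      ¬ ({x : Fin n → F | x ≠ 0 ∧ f x = 0} ∩ {x : Fin n → F | ∑ i, v i * x i = 0} ⊆
          {x : Fin n → F | ∑ i, v' i * x i = 0}))
    (hb : ∀ v : Fin n → F, v ≠ 0 →
      ∃ x : Fin n → F, f x + ∑ i, v i * x i = 0 ∧ f x ≠ 0) :
    Fintype.card {x : Fin n → F // x ≠ 0} = Fintype.card F ^ n - 1 ∧
    Module.finrank F ↥(Submodule.span F (Set.range (cfWord F n f))) = n + 1 ∧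
    (∀ c ∈ Set.range (cfWord F n f), c ≠ 0 → ∀ c' ∈ Set.range (cfWord F n f),
      (∀ x, c' x ≠ 0 → c x ≠ 0) → ∃ lam : F, c' = lam • c) := by
  have : Nonempty (Fin n) := ⟨⟨0, by omega⟩⟩
  let L := cfWordLinearMap F n f
  have hL : Function.Injective L := by
    rw [← LinearMap.ker_eq_bot, LinearMap.ker_eq_bot']
    exact fun p hp => eq_zero_of_forall_codeword_eq_zero ha1 ha2 fun x hx => congrFun hp ⟨x, hx⟩
  refine ⟨by simp [Fintype.card_subtype_compl], ?_, ?_⟩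
  · rw [← coe_cfWordLinearMap, ← LinearMap.coe_range, Submodule.span_eq,
      LinearMap.finrank_range_of_inj hL, Module.finrank_prod, Module.finrank_self,
      Module.finrank_fin_fun, add_comm]
  rintro _ ⟨p, rfl⟩ hc _ ⟨p', rfl⟩ hsupp
  have hp : p ≠ 0 := by
    rintro rfl
    exact hc (map_zero L)
  have hzeros : codeZeros f p ⊆ codeZeros f p' := fun x ⟨hx0, hx⟩ =>
    ⟨hx0, not_not.mp fun h => hsupp ⟨x, hx0⟩ h hx⟩
  obtain ⟨c, rfl⟩ := exists_eq_smul_of_codeZeros_subset ha1 ha2 ha3 hb hp hzeros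
  exact ⟨c, map_smul L c p⟩
end

section
/- Let q be odd and f : F_q^n → F_q be defined by f(x) = α_{wt(x)} if wt(x) ≤ k and f(x) = 0 if wt(x) > k, where n > 3, 2 ≤ k ≤ n − 2, and α_1,…,α_k ∈ F_q^*. Then V(f)* does not contain any punctured hyperplane H(v)* = H(v) \ {0}. -/
lemma wt_le_two {F : Type} [DecidableEq F] [Zero F] {n : ℕ} (x : Fin n → F) (i j : Fin n)
    (h : ∀ t, t ≠ i → t ≠ j → x t = 0) : hammingNorm x ≤ 2 := by
  have : ({t | x t ≠ 0} : Finset (Fin n)) ⊆ {i, j} := by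
    intro t ht
    simp only [Finset.mem_filter, Finset.mem_univ, true_and] at ht
    simp only [Finset.mem_insert, Finset.mem_singleton]
    by_contra hc
    push_neg at hc
    exact ht (h t hc.1 hc.2)
  calc hammingNorm x = ({t | x t ≠ 0} : Finset (Fin n)).card := rfl
    _ ≤ ({i, j} : Finset (Fin n)).card := Finset.card_le_card this
    _ ≤ 2 := Finset.card_insert_le _ _ |>.trans (by simp)

/-- let `q` be odd and `f(x) = α_{wt(x)}` if `wt(x) ≤ k`, `f(x) = 0`
otherwise, where `n > 3`, `2 ≤ k ≤ n - 2` and `α_1, …, α_k ∈ F_q^*`.  Then `V(f)*`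
contains no punctured hyperplane `H(v) \ {0}`. -/
theorem stmt14 (F : Type) [Field F] [Fintype F] [DecidableEq F]
    (hq : Odd (Fintype.card F)) (n k : ℕ) (hn : 3 < n) (hk2 : 2 ≤ k) (hkn : k ≤ n - 2)
    (α : ℕ → F) (hα : ∀ i, 1 ≤ i → i ≤ k → α i ≠ 0)
    (f : (Fin n → F) → F)
    (hf : ∀ x : Fin n → F, f x = if hammingNorm x ≤ k then α (hammingNorm x) else 0) :
    ∀ v : Fin n → F, v ≠ 0 →
      ¬ ({x : Fin n → F | ∑ i, v i * x i = 0} \ {0} ⊆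
          {x : Fin n → F | x ≠ 0 ∧ f x = 0}) := by
  intro v hv hsub
  obtain ⟨i, hi⟩ := Function.ne_iff.mp hv
  have hcard : 1 < Fintype.card (Fin n) := by simp; omega
  obtain ⟨j, hj⟩ := Fintype.exists_ne_of_one_lt_card hcard i
  -- pick x of weight ≤ 2 in the hyperplane
  set x : Fin n → F := fun t => if t = i then v j else if t = j then -(v i) else 0 with hxdef
  have hxj : x j = -(v i) := by simp [hxdef, (by exact hj : j ≠ i)]
  have hxi : x i = v j := by simp [hxdef]
  have hxne : x ≠ 0 := by
    intro h0
    have := congrFun h0 j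
    rw [hxj] at this
    simp at this
    exact hi this
  have hsum : ∑ t, v t * x t = 0 := by
    have : ∀ t, v t * x t = (if t = i then v i * v j else 0) + (if t = j then -(v j * v i) else 0) := by
      intro t
      by_cases h1 : t = i
      · subst h1; simp [hxi, hj.symm]
      · by_cases h2 : t = j
        · subst h2; simp [hxj, h1]
        · simp [hxdef, h1, h2]
    simp_rw [this, Finset.sum_add_distrib, Finset.sum_ite_eq', Finset.mem_univ]
    simp [mul_comm]
  have hmem : x ∈ ({x : Fin n → F | ∑ i, v i * x i = 0} \ {0}) := ⟨hsum, hxne⟩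
  obtain ⟨-, hfx⟩ := hsub hmem
  have hwt2 : hammingNorm x ≤ 2 := wt_le_two x i j (fun t h1 h2 => by simp [hxdef, h1, h2])
  have hwt1 : 1 ≤ hammingNorm x := hammingNorm_pos_iff.mpr hxne
  rw [hf, if_pos (hwt2.trans hk2)] at hfx
  exact hα _ hwt1 (hwt2.trans hk2) hfx
end

section
/- Let q be odd and f as above (f(x) = α_{wt(x)} for wt(x) ≤ k, f(x) = 0 for wt(x) > k, with n > 3, 2 ≤ k ≤ n−2). Then for every two hyperplanes H(v), H(v') through the origin, if V(f)* ∩ H(v) ⊆ H(v'), then H(v) = H(v'). -/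
/-!
Since `q ≥ 3`, for each coordinate `x i` there is a `b ≠ 0` with `x i + b ≠ 0`; adjusting the
coordinate `j` (where `v j ≠ 0`) puts the resulting `y` in `H(v)`. Then `y` and `x + y` lie in
`H(v)` with weight `≥ n - 1 > k`, hence in `V(f)*`, so every `x ∈ H(v)` is a difference of
vectors of `V(f)* ∩ H(v) ⊆ H(v')`. Thus `H(v) ⊆ H(v')`, and the kernel of a nonzero linear form
is a maximal subspace.
-/

open Matrix

section

variable {ι K : Type*} [Fintype ι] [Field K]

theorem exists_ne_zero_and_add_ne_zero {G : Type*} [AddGroup G] [Fintype G]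
    (hG : 2 < Fintype.card G) (a : G) : ∃ b, b ≠ 0 ∧ a + b ≠ 0 := by
  classical
  by_contra! h
  have hsub : (Finset.univ : Finset G) ⊆ {0, -a} := fun b _ => by
    by_cases hb : b = 0
    · simp [hb]
    · simp [eq_neg_of_add_eq_zero_right (h b hb)]
  have := (Finset.card_le_card hsub).trans Finset.card_le_two
  simp only [Finset.card_univ] at this
  omega

theorem card_sub_one_le_hammingNorm {β : ι → Type*} [∀ i, Zero (β i)] [∀ i, DecidableEq (β i)]
    {x : ∀ i, β i} (j : ι) (hx : ∀ i, i ≠ j → x i ≠ 0) :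
    Fintype.card ι - 1 ≤ hammingNorm x := by
  classical
  have hsub : Finset.univ.erase j ⊆ Finset.univ.filter (fun i => x i ≠ 0) := fun i hi =>
    Finset.mem_filter.2 ⟨Finset.mem_univ i, hx i (Finset.ne_of_mem_erase hi)⟩
  have hcard := Finset.card_le_card hsub
  rwa [Finset.card_erase_of_mem (Finset.mem_univ j), Finset.card_univ] at hcard

theorem exists_dotProduct_eq_zero_and_ne_zero [Fintype K] [DecidableEq ι]
    (hK : 2 < Fintype.card K) {v : ι → K} {j : ι} (hj : v j ≠ 0) (x : ι → K) :
    ∃ y, v ⬝ᵥ y = 0 ∧ ∀ i, i ≠ j → y i ≠ 0 ∧ x i + y i ≠ 0 := by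
  choose b hb using fun i => exists_ne_zero_and_add_ne_zero hK (x i)
  refine ⟨b - ((v ⬝ᵥ b) / v j) • Pi.single j 1, ?_, fun i hi => ?_⟩
  · rw [dotProduct_sub, dotProduct_smul, dotProduct_single, smul_eq_mul]
    field_simp
    ring
  · simpa [Pi.single_apply, hi] using hb i

theorem mem_span_hammingNorm_of_dotProduct_eq_zero [Fintype K] [DecidableEq K]
    (hK : 2 < Fintype.card K) {v x : ι → K} (hv : v ≠ 0) (hx : v ⬝ᵥ x = 0) :
    x ∈ Submodule.span K {y | v ⬝ᵥ y = 0 ∧ Fintype.card ι - 1 ≤ hammingNorm y} := by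
  classical
  obtain ⟨j, hj⟩ := Function.ne_iff.1 hv
  obtain ⟨y, hy, hy_ne⟩ := exists_dotProduct_eq_zero_and_ne_zero hK hj x
  have hxy : x = (x + y) - y := (add_sub_cancel_right x y).symm
  rw [hxy]
  refine Submodule.sub_mem _ (Submodule.subset_span ⟨?_, ?_⟩) (Submodule.subset_span ⟨hy, ?_⟩)
  · rw [dotProduct_add, hx, hy, add_zero]
  · exact card_sub_one_le_hammingNorm j fun i hi => (hy_ne i hi).2
  · exact card_sub_one_le_hammingNorm j fun i hi => (hy_ne i hi).1

theorem dotProductBilin_eq_zero_iff {v : ι → K} : dotProductBilin K K v = 0 ↔ v = 0 :=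
  ⟨fun h => dotProduct_eq_zero v fun w => by simpa using LinearMap.congr_fun h w,
    fun h => h ▸ map_zero _⟩

theorem setOf_dotProduct_eq_zero_eq {v v' : ι → K} (hv : v ≠ 0) (hv' : v' ≠ 0)
    (h : ∀ x, v ⬝ᵥ x = 0 → v' ⬝ᵥ x = 0) :
    {x | v ⬝ᵥ x = 0} = {x | v' ⬝ᵥ x = 0} := by
  have hcoatom : IsCoatom (LinearMap.ker (dotProductBilin K K v)) :=
    LinearMap.isCoatom_ker_of_surjective
      (LinearMap.surjective_of_ne_zero (dotProductBilin_eq_zero_iff.not.2 hv))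
  have hle : LinearMap.ker (dotProductBilin K K v) ≤ LinearMap.ker (dotProductBilin K K v') :=
    fun x hx => by simpa using h x (by simpa using hx)
  rcases hcoatom.le_iff.1 hle with htop | heq
  · exact absurd (dotProductBilin_eq_zero_iff.1 (LinearMap.ker_eq_top.1 htop)) hv'
  · ext x
    simpa using (SetLike.ext_iff.1 heq x).symm

end

theorem stmt15_general (F : Type) [Field F] [Fintype F] [DecidableEq F]
    (hq : Odd (Fintype.card F)) (n k : ℕ) (hn : 3 < n) (hkn : k ≤ n - 2)
    (α : ℕ → F)
    (f : (Fin n → F) → F)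
    (hf : ∀ x : Fin n → F, f x = if hammingNorm x ≤ k then α (hammingNorm x) else 0) :
    ∀ v v' : Fin n → F, v ≠ 0 → v' ≠ 0 →
      ({x : Fin n → F | x ≠ 0 ∧ f x = 0} ∩ {x : Fin n → F | ∑ i, v i * x i = 0} ⊆
          {x : Fin n → F | ∑ i, v' i * x i = 0}) →
      {x : Fin n → F | ∑ i, v i * x i = 0} = {x : Fin n → F | ∑ i, v' i * x i = 0} := by
  intro v v' hv hv' hsub
  have hK : 2 < Fintype.card F := by
    have := Fintype.one_lt_card (α := F)
    obtain ⟨m, hm⟩ := hq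
    omega
  have heavy_mem : ∀ y, v ⬝ᵥ y = 0 ∧ Fintype.card (Fin n) - 1 ≤ hammingNorm y →
      y ∈ LinearMap.ker (dotProductBilin F F v') := by
    rintro y ⟨hy, hwt⟩
    rw [Fintype.card_fin] at hwt
    have hk : k < hammingNorm y := by omega
    have hfy : f y = 0 := by rw [hf, if_neg hk.not_ge]
    rw [LinearMap.mem_ker, dotProductBilin_apply_apply]
    exact hsub ⟨⟨hammingNorm_pos_iff.1 (by omega), hfy⟩, hy⟩
  refine setOf_dotProduct_eq_zero_eq hv hv' fun x hx => ?_
  simpa using Submodule.span_le.2 heavy_mem (mem_span_hammingNorm_of_dotProduct_eq_zero hK hv hx)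

/-- let `q` be odd and `f(x) = α_{wt(x)}` if `wt(x) ≤ k`, `f(x) = 0`
otherwise, where `n > 3`, `2 ≤ k ≤ n - 2` and `α_1, …, α_k ∈ F_q^*`.  Then for any
two hyperplanes `H(v), H(v')` through the origin, `V(f)* ∩ H(v) ⊆ H(v')` implies
`H(v) = H(v')`. -/
theorem stmt15 (F : Type) [Field F] [Fintype F] [DecidableEq F]
    (hq : Odd (Fintype.card F)) (n k : ℕ) (hn : 3 < n) (hk2 : 2 ≤ k) (hkn : k ≤ n - 2)
    (α : ℕ → F) (hα : ∀ i, 1 ≤ i → i ≤ k → α i ≠ 0)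
    (f : (Fin n → F) → F)
    (hf : ∀ x : Fin n → F, f x = if hammingNorm x ≤ k then α (hammingNorm x) else 0) :
    ∀ v v' : Fin n → F, v ≠ 0 → v' ≠ 0 →
      ({x : Fin n → F | x ≠ 0 ∧ f x = 0} ∩ {x : Fin n → F | ∑ i, v i * x i = 0} ⊆
          {x : Fin n → F | ∑ i, v' i * x i = 0}) →
      {x : Fin n → F | ∑ i, v i * x i = 0} = {x : Fin n → F | ∑ i, v' i * x i = 0} :=
  stmt15_general F hq n k hn hkn α f hf
end

section
/- Let n = rk with r ≥ 2, k ≥ 2, and f_{r,k}(x) = Σ_{j=0}^{k−1} x_{jr+1}·⋯·x_{jr+r}. Then for every nonzero v ∈ F_q^n, the punctured hyperplane H(v)* is not contained in V(f_{r,k})*; moreover there exists x with f_{r,k}(x) ≠ 0 and f_{r,k}(x) + v·x = 0. -/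
/-- for `r, k ≥ 2` and every nonzero `v ∈ F_q^{rk}`, the punctured
hyperplane `H(v) \ {0}` is not contained in `V(f_{r,k})*`; moreover there exists `x`
with `f_{r,k}(x) ≠ 0` and `f_{r,k}(x) + v·x = 0`. -/
theorem stmt16 (F : Type) [Field F] [Fintype F] (r k : ℕ) (hr : 2 ≤ r) (hk : 2 ≤ k) :
    ∀ v : Fin (r * k) → F, v ≠ 0 →
      (¬ ({x : Fin (r * k) → F | ∑ i, v i * x i = 0} \ {0} ⊆
          {x : Fin (r * k) → F | x ≠ 0 ∧ frk F r k x = 0})) ∧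
      (∃ x : Fin (r * k) → F, frk F r k x ≠ 0 ∧ frk F r k x + ∑ i, v i * x i = 0) := by
  intro v hv
  have hr0 : 0 < r := by omega
  obtain ⟨i0, hi0⟩ : ∃ i, v i ≠ 0 := by
    by_contra h; push_neg at h; exact hv (funext fun i => h i)
  -- a block index `j1` different from the block of `i0`
  obtain ⟨j1, hj01⟩ : ∃ j1 : Fin k, j1.1 ≠ i0.1 / r := by
    by_cases h : i0.1 / r = 0
    · exact ⟨⟨1, by omega⟩, by simp [h]⟩
    · exact ⟨⟨0, by omega⟩, by simpa using fun hh => h hh.symm⟩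
  -- a position inside a block different from the position of `i0`
  obtain ⟨i', hi'⟩ : ∃ i' : Fin r, i'.1 ≠ i0.1 % r := by
    by_cases h : i0.1 % r = 0
    · exact ⟨⟨1, by omega⟩, by simp [h]⟩
    · exact ⟨⟨0, by omega⟩, by simpa using fun hh => h hh.symm⟩
  set X : F → Fin (r * k) → F :=
    fun t m => if m.1 / r = j1.1 then 1 else if m = i0 then t else 0 with hX
  have hdiv : ∀ (j : Fin k) (i : Fin r), (mIdx r k j i).1 / r = j.1 := by
    intro j i
    show (j.1 * r + i.1) / r = j.1
    rw [Nat.mul_comm, Nat.mul_add_div hr0, Nat.div_eq_of_lt i.2, Nat.add_zero]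
  -- frk (X t) = 1 for every t
  have hfrk : ∀ t, frk F r k (X t) = 1 := by
    intro t
    unfold frk
    have key : ∀ j : Fin k, (∏ i : Fin r, X t (mIdx r k j i)) = if j = j1 then 1 else 0 := by
      intro j
      by_cases hj : j = j1
      · subst hj
        rw [if_pos rfl]
        apply Finset.prod_eq_one
        intro i _
        simp [hX, hdiv]
      · rw [if_neg hj]
        apply Finset.prod_eq_zero (Finset.mem_univ i')
        have h1 : (mIdx r k j i').1 / r ≠ j1.1 := by
          rw [hdiv]; exact fun h => hj (Fin.ext h)
        have h2 : mIdx r k j i' ≠ i0 := by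
          intro h
          have hm := congrArg (fun z : Fin (r * k) => z.1 % r) h
          simp only [mIdx] at hm
          rw [Nat.mul_comm, Nat.mul_add_mod, Nat.mod_eq_of_lt i'.2] at hm
          exact hi' hm
        simp [hX, h1, h2]
    rw [Finset.sum_congr rfl (fun j _ => key j)]
    simp
  -- linearity in t
  have hXt0 : ∀ t m, X t m = X 0 m + (if m = i0 then t else 0) := by
    intro t m
    by_cases h : m = i0
    · subst h
      have hne : m.1 / r ≠ j1.1 := fun h => hj01 h.symm
      simp [hX, hne]
    · simp [hX, h]
  have hsum : ∀ t, (∑ m, v m * X t m) = (∑ m, v m * X 0 m) + v i0 * t := by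
    intro t
    have key : ∀ m, v m * X t m = v m * X 0 m + (if m = i0 then v m * t else 0) := by
      intro m
      rw [hXt0 t m, mul_add]
      by_cases h : m = i0 <;> simp [h]
    rw [Finset.sum_congr rfl (fun m _ => key m), Finset.sum_add_distrib]
    simp
  have hXne : ∀ t, X t ≠ 0 := by
    intro t h
    have h1 : X t (mIdx r k j1 ⟨0, hr0⟩) = 1 := by simp [hX, hdiv]
    rw [h] at h1
    exact one_ne_zero h1.symm
  have hcancel : ∀ c : F, v i0 * (c / v i0) = c := fun c => mul_div_cancel₀ c hi0
  constructor
  · intro hsub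
    have hmem : X (-(∑ m, v m * X 0 m) / v i0) ∈
        ({x : Fin (r * k) → F | ∑ i, v i * x i = 0} \ {0}) := by
      refine ⟨?_, hXne _⟩
      show (∑ i, v i * X (-(∑ m, v m * X 0 m) / v i0) i) = 0
      rw [hsum, hcancel]
      ring
    have hfr := (hsub hmem).2
    rw [hfrk] at hfr
    exact one_ne_zero hfr
  · refine ⟨X (-(1 + ∑ m, v m * X 0 m) / v i0), ?_, ?_⟩
    · rw [hfrk]; exact one_ne_zero
    · rw [hfrk, hsum, hcancel]
      ring
end

section
/- Let n = rk with r ≥ 3, k ≥ 2, and f = f_{r,k} as above. Then for any nonzero v, v' ∈ F_q^n, if V(f)* ∩ H(v) ⊆ H(v') then H(v) = H(v'). Consequently V(f)* spans F_q^n. -/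
/-! A nonzero vector with at most two nonzero coordinates is a zero of `f_{r,k}` once `r ≥ 3`, since
every monomial of `f_{r,k}` involves `r` distinct variables. Such vectors already span `F^n`, and
they cut out every hyperplane: if `v n ≠ 0`, the vectors `p_i = e_i - (v i / v n) e_n` lie in
`H(v)`, and `v' ⬝ᵥ p_i = 0` for all `i ≠ n` forces `v' = (v' n / v n) • v`. -/

section TwoSupported

variable {F ι : Type*} [Field F] [Fintype ι]

lemma setOf_smul_dotProduct_eq_zero {c : F} (hc : c ≠ 0) (v : ι → F) :
    {x | (c • v) ⬝ᵥ x = 0} = {x | v ⬝ᵥ x = 0} := by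
  ext x
  simp [smul_dotProduct, hc]

variable [DecidableEq ι]

lemma dotProduct_single_sub_smul_single (w : ι → F) (i n : ι) (c : F) :
    w ⬝ᵥ (Pi.single i 1 - c • Pi.single n 1) = w i - c * w n := by
  simp [dotProduct_sub, dotProduct_smul, dotProduct_single]

lemma eq_smul_of_dotProduct_single_sub_eq_zero {v v' : ι → F} {n : ι} (hn : v n ≠ 0)
    (h : ∀ i ≠ n, v' ⬝ᵥ (Pi.single i 1 - (v i / v n) • Pi.single n 1) = 0) :
    v' = (v' n / v n) • v := by
  ext i
  rcases eq_or_ne i n with rfl | hi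
  · simp [hn]
  · have := h i hi
    rw [dotProduct_single_sub_smul_single] at this
    rw [Pi.smul_apply, smul_eq_mul, sub_eq_zero.mp this]
    ring

variable {S : Set (ι → F)}
  (hS : ∀ x : ι → F, x ≠ 0 → ∀ s : Finset ι, s.card ≤ 2 → (∀ m ∉ s, x m = 0) → x ∈ S)
include hS

lemma setOf_dotProduct_eq_zero_eq_of_inter_subset {v v' : ι → F} (hv : v ≠ 0) (hv' : v' ≠ 0)
    (h : S ∩ {x | v ⬝ᵥ x = 0} ⊆ {x | v' ⬝ᵥ x = 0}) :
    {x | v ⬝ᵥ x = 0} = {x | v' ⬝ᵥ x = 0} := by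
  obtain ⟨n, hn⟩ : ∃ n, v n ≠ 0 := Function.ne_iff.mp hv
  have hp : ∀ i ≠ n, Pi.single i 1 - (v i / v n) • Pi.single n 1 ∈ S ∩ {x | v ⬝ᵥ x = 0} := by
    intro i hi
    refine ⟨hS _ ?_ {i, n} Finset.card_le_two ?_, ?_⟩
    · exact Function.ne_iff.mpr ⟨i, by simp [hi]⟩
    · intro m hm
      simp only [Finset.mem_insert, Finset.mem_singleton, not_or] at hm
      simp [hm.1, hm.2]
    · show v ⬝ᵥ _ = 0
      rw [dotProduct_single_sub_smul_single, div_mul_cancel₀ _ hn, sub_self]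
  have hv'_eq := eq_smul_of_dotProduct_single_sub_eq_zero hn fun i hi => h (hp i hi)
  have hc : v' n / v n ≠ 0 := by
    intro hc
    exact hv' (by rw [hv'_eq, hc, zero_smul])
  rw [hv'_eq, setOf_smul_dotProduct_eq_zero hc]

lemma span_eq_top_of_two_supported : Submodule.span F S = ⊤ := by
  refine top_unique ?_
  rw [← (Pi.basisFun F ι).span_eq]
  refine Submodule.span_mono (Set.range_subset_iff.mpr fun i => ?_)
  refine hS _ ?_ {i} (by simp) fun m hm => ?_
  · simp
  · simp [Finset.mem_singleton.not.mp hm]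

end TwoSupported

lemma mIdx_injective (r k : ℕ) (j : Fin k) : Function.Injective (mIdx r k j) := by
  intro i i' h
  simp only [mIdx, Fin.mk.injEq] at h
  exact Fin.ext (by omega)

lemma frk_eq_zero_of_card_lt {F : Type} [Field F] {r k : ℕ} {x : Fin (r * k) → F}
    (s : Finset (Fin (r * k))) (hs : s.card < r) (hx : ∀ m ∉ s, x m = 0) : frk F r k x = 0 := by
  refine Finset.sum_eq_zero fun j _ => ?_
  obtain ⟨i, hi⟩ : ∃ i, mIdx r k j i ∉ s := by
    by_contra! h
    have := Finset.card_le_card_of_injOn (mIdx r k j) (s := Finset.univ) (fun i _ => h i)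
      (mIdx_injective r k j).injOn
    simp only [Finset.card_univ, Fintype.card_fin] at this
    omega
  exact Finset.prod_eq_zero (Finset.mem_univ i) (hx _ hi)

theorem stmt17_general (F : Type) [Field F] (r k : ℕ) (hr : 3 ≤ r) :
    (∀ v v' : Fin (r * k) → F, v ≠ 0 → v' ≠ 0 →
      ({x : Fin (r * k) → F | x ≠ 0 ∧ frk F r k x = 0} ∩
          {x : Fin (r * k) → F | ∑ i, v i * x i = 0} ⊆
        {x : Fin (r * k) → F | ∑ i, v' i * x i = 0}) →
      {x : Fin (r * k) → F | ∑ i, v i * x i = 0} =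
        {x : Fin (r * k) → F | ∑ i, v' i * x i = 0}) ∧
    Submodule.span F {x : Fin (r * k) → F | x ≠ 0 ∧ frk F r k x = 0} = ⊤ := by
  have hS : ∀ x : Fin (r * k) → F, x ≠ 0 → ∀ s : Finset (Fin (r * k)), s.card ≤ 2 →
      (∀ m ∉ s, x m = 0) → x ∈ {x | x ≠ 0 ∧ frk F r k x = 0} :=
    fun x hx s hs hxs => ⟨hx, frk_eq_zero_of_card_lt s (by omega) hxs⟩
  exact ⟨fun v v' hv hv' h => setOf_dotProduct_eq_zero_eq_of_inter_subset hS hv hv' h,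
    span_eq_top_of_two_supported hS⟩

/-- for `r ≥ 3`, `k ≥ 2` and any nonzero `v, v'`, if
`V(f_{r,k})* ∩ H(v) ⊆ H(v')` then `H(v) = H(v')`; consequently `V(f_{r,k})*`
spans `F_q^{rk}`. -/
theorem stmt17 (F : Type) [Field F] [Fintype F] (r k : ℕ) (hr : 3 ≤ r) (hk : 2 ≤ k) :
    (∀ v v' : Fin (r * k) → F, v ≠ 0 → v' ≠ 0 →
      ({x : Fin (r * k) → F | x ≠ 0 ∧ frk F r k x = 0} ∩
          {x : Fin (r * k) → F | ∑ i, v i * x i = 0} ⊆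
        {x : Fin (r * k) → F | ∑ i, v' i * x i = 0}) →
      {x : Fin (r * k) → F | ∑ i, v i * x i = 0} =
        {x : Fin (r * k) → F | ∑ i, v' i * x i = 0}) ∧
    Submodule.span F {x : Fin (r * k) → F | x ≠ 0 ∧ frk F r k x = 0} = ⊤ :=
  stmt17_general F r k hr
end

section
/- For every prime power q there exist infinitely many integers r such that the set V(f_{r,2})* = {x ∈ F_q^{2r} \ {0} : f_{r,2}(x) = 0} satisfies #V(f_{r,2})* ≥ 2q^{2r−1} − q^{2r−2} − 1. -/
open Finset

/-- Interleaving map: builds a vector of `F^(r*2)` from two vectors of `F^r`. -/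
def joinFn {F : Type} (r : ℕ) (a b : Fin r → F) : Fin (r * 2) → F :=
  fun idx =>
    match idx with
    | ⟨v, hv⟩ => if h : v < r then a ⟨v, h⟩ else b ⟨v - r, by omega⟩

section Aux

variable {F : Type} [Field F] [Fintype F] [DecidableEq F]

/-- Number of vectors in `F^r` whose coordinate product vanishes. -/
lemma cardZeroProd (r : ℕ) :
    (Finset.univ.filter (fun y : Fin r → F => ∏ i, y i = 0)).card =
      Fintype.card F ^ r - (Fintype.card F - 1) ^ r := by
  classical
  set q := Fintype.card F with hq
  have hneg : (Finset.univ.filter (fun y : Fin r → F => ¬ ∏ i, y i = 0)) =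
      Fintype.piFinset (fun _ : Fin r => Finset.univ.filter (fun a : F => a ≠ 0)) := by
    ext y
    simp [Fintype.mem_piFinset, Finset.prod_ne_zero_iff]
  have hcard1 : (Finset.univ.filter (fun a : F => a ≠ 0)).card = q - 1 := by
    rw [Finset.filter_ne']
    simp [Finset.card_erase_of_mem, hq]
  have hnegcard :
      (Finset.univ.filter (fun y : Fin r → F => ¬ ∏ i, y i = 0)).card = (q - 1) ^ r := by
    rw [hneg, Fintype.card_piFinset]
    simp [hcard1]
  have htot := Finset.card_filter_add_card_filter_not
      (s := (Finset.univ : Finset (Fin r → F))) (p := fun y : Fin r → F => ∏ i, y i = 0)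
  have hall : (Finset.univ : Finset (Fin r → F)).card = q ^ r := by
    simp [Finset.card_univ, Fintype.card_fun, hq]
  rw [hnegcard, hall] at htot
  exact Nat.eq_sub_of_add_eq htot

lemma join_block0 (r : ℕ) (a b : Fin r → F) (i : Fin r) :
    joinFn r a b (mIdx r 2 (0 : Fin 2) i) = a i := by
  have h : ((mIdx r 2 (0 : Fin 2) i : Fin (r * 2)) : ℕ) = i.1 := by
    simp [mIdx]
  simp only [joinFn]
  rw [dif_pos (by rw [h]; exact i.2)]
  congr 1
  exact Fin.ext h

lemma join_block1 (r : ℕ) (a b : Fin r → F) (i : Fin r) :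
    joinFn r a b (mIdx r 2 (1 : Fin 2) i) = b i := by
  have h : ((mIdx r 2 (1 : Fin 2) i : Fin (r * 2)) : ℕ) = r + i.1 := by
    simp [mIdx, Nat.one_mul, Nat.add_comm]
  simp only [joinFn]
  rw [dif_neg (by rw [h]; omega)]
  congr 1
  refine Fin.ext ?_
  show ((mIdx r 2 (1 : Fin 2) i : Fin (r * 2)) : ℕ) - r = i.1
  omega

/-- The set of vectors whose two block products both vanish has cardinality `Z^2`. -/
lemma cardS (r : ℕ) :
    (Finset.univ.filter (fun x : Fin (r * 2) → F =>
        (∏ i, x (mIdx r 2 (0 : Fin 2) i)) = 0 ∧ (∏ i, x (mIdx r 2 (1 : Fin 2) i)) = 0)).card =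
      ((Finset.univ.filter (fun y : Fin r → F => ∏ i, y i = 0)).card) ^ 2 := by
  classical
  set A := (Finset.univ.filter (fun y : Fin r → F => ∏ i, y i = 0)) with hA
  have hcard : (A ×ˢ A).card = A.card ^ 2 := by
    rw [Finset.card_product, sq]
  rw [← hcard]
  apply Finset.card_bij'
    (i := fun x _ => ((fun i => x (mIdx r 2 (0 : Fin 2) i)), (fun i => x (mIdx r 2 (1 : Fin 2) i))))
    (j := fun p _ => joinFn r p.1 p.2)
  · intro x hx
    simp only [Finset.mem_filter, Finset.mem_univ, true_and] at hx
    simp only [Finset.mem_product, hA, Finset.mem_filter, Finset.mem_univ, true_and]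
    exact hx
  · intro p hp
    simp only [Finset.mem_product, hA, Finset.mem_filter, Finset.mem_univ, true_and] at hp
    simp only [Finset.mem_filter, Finset.mem_univ, true_and]
    constructor
    · rw [show (∏ i, joinFn r p.1 p.2 (mIdx r 2 (0 : Fin 2) i)) = ∏ i, p.1 i from
        Finset.prod_congr rfl (fun i _ => join_block0 r p.1 p.2 i)]
      exact hp.1
    · rw [show (∏ i, joinFn r p.1 p.2 (mIdx r 2 (1 : Fin 2) i)) = ∏ i, p.2 i from
        Finset.prod_congr rfl (fun i _ => join_block1 r p.1 p.2 i)]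
      exact hp.2
  · intro x _
    funext idx
    by_cases h : (idx : ℕ) < r
    · rw [show (joinFn r (fun i => x (mIdx r 2 (0 : Fin 2) i))
          (fun i => x (mIdx r 2 (1 : Fin 2) i)) idx) =
          x (mIdx r 2 (0 : Fin 2) ⟨(idx : ℕ), h⟩) from dif_pos h]
      congr 1
      exact Fin.ext (by simp [mIdx])
    · rw [show (joinFn r (fun i => x (mIdx r 2 (0 : Fin 2) i))
          (fun i => x (mIdx r 2 (1 : Fin 2) i)) idx) =
          x (mIdx r 2 (1 : Fin 2) ⟨(idx : ℕ) - r, by have := idx.2; omega⟩) from dif_neg h]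
      congr 1
      exact Fin.ext (by simp [mIdx]; omega)
  · intro p _
    ext i
    · exact join_block0 r p.1 p.2 i
    · exact join_block1 r p.1 p.2 i

/-- Main counting lower bound. -/
lemma lowerBound (r : ℕ) :
    (Finset.univ.filter (fun x : Fin (r * 2) → F => x ≠ 0 ∧ frk F r 2 x = 0)).card ≥
      (Fintype.card F ^ r - (Fintype.card F - 1) ^ r) ^ 2 - 1 := by
  classical
  set S := (Finset.univ.filter (fun x : Fin (r * 2) → F =>
      (∏ i, x (mIdx r 2 (0 : Fin 2) i)) = 0 ∧ (∏ i, x (mIdx r 2 (1 : Fin 2) i)) = 0)) with hS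
  have hsub : S.erase 0 ⊆
      (Finset.univ.filter (fun x : Fin (r * 2) → F => x ≠ 0 ∧ frk F r 2 x = 0)) := by
    intro x hx
    rw [Finset.mem_erase] at hx
    obtain ⟨hx0, hxS⟩ := hx
    rw [hS, Finset.mem_filter] at hxS
    rw [Finset.mem_filter]
    refine ⟨Finset.mem_univ _, hx0, ?_⟩
    rw [frk, Fin.sum_univ_two, hxS.2.1, hxS.2.2, add_zero]
  calc (Finset.univ.filter (fun x : Fin (r * 2) → F => x ≠ 0 ∧ frk F r 2 x = 0)).card
      ≥ (S.erase 0).card := Finset.card_le_card hsub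
    _ ≥ S.card - 1 := Finset.pred_card_le_card_erase
    _ = (Fintype.card F ^ r - (Fintype.card F - 1) ^ r) ^ 2 - 1 := by
        rw [hS, cardS, cardZeroProd]

end Aux

/-- Bernoulli-style bound: `8 (q-1)^r ≤ q^r` for all `r ≥ 7(q-1)`. -/
lemma eight_pow_le (q : ℕ) (hq : 2 ≤ q) {r : ℕ} (hr : 7 * (q - 1) ≤ r) :
    8 * (q - 1) ^ r ≤ q ^ r := by
  set m := q - 1 with hm
  have hm1 : 1 ≤ m := by omega
  have hqm : q = m + 1 := by omega
  have base : 8 * m ^ (7 * m) ≤ q ^ (7 * m) := by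
    have hmQ : (0 : ℚ) < (m : ℚ) := by exact_mod_cast hm1
    have hinv : (0 : ℚ) ≤ ((m : ℚ))⁻¹ := by positivity
    have hb := one_add_mul_le_pow (a := ((m : ℚ))⁻¹) (by linarith) (7 * m)
    have h8 : (8 : ℚ) ≤ (1 + ((m : ℚ))⁻¹) ^ (7 * m) := by
      have : (1 : ℚ) + ((7 * m : ℕ) : ℚ) * ((m : ℚ))⁻¹ = 8 := by
        push_cast
        field_simp
        ring
      linarith [hb, this ▸ hb]
    have hmul : (8 : ℚ) * (m : ℚ) ^ (7 * m) ≤ ((1 + ((m : ℚ))⁻¹) * m) ^ (7 * m) := by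
      rw [mul_pow]
      have hpow : (0 : ℚ) ≤ (m : ℚ) ^ (7 * m) := by positivity
      nlinarith [h8, hpow]
    have heq : (1 + ((m : ℚ))⁻¹) * (m : ℚ) = (q : ℚ) := by
      field_simp
      rw [hqm]; push_cast; ring
    rw [heq] at hmul
    exact_mod_cast hmul
  obtain ⟨n, rfl⟩ := Nat.exists_eq_add_of_le hr
  clear hr
  induction n with
  | zero => simpa using base
  | succ n ih =>
    have : 7 * m + (n + 1) = (7 * m + n) + 1 := by ring
    rw [this, pow_succ, pow_succ, ← mul_assoc]
    calc 8 * m ^ (7 * m + n) * m ≤ q ^ (7 * m + n) * m := Nat.mul_le_mul_right m ih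
      _ ≤ q ^ (7 * m + n) * q := Nat.mul_le_mul_left _ (by omega)

/-- Arithmetic: the bound `Z² − 1 ≥ 2q^{2r−1} − q^{2r−2} − 1` given `8(q−1)^r ≤ q^r`. -/
lemma arith (q r : ℕ) (hq : 2 ≤ q) (hr : 1 ≤ r) (h8 : 8 * (q - 1) ^ r ≤ q ^ r) :
    2 * q ^ (2 * r - 1) - q ^ (2 * r - 2) - 1 ≤ (q ^ r - (q - 1) ^ r) ^ 2 - 1 := by
  set s := r - 1 with hs
  have hr1 : r = s + 1 := by omega
  have hle : (q - 1) ^ r ≤ q ^ r := Nat.pow_le_pow_left (by omega) r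
  set Z := q ^ r - (q - 1) ^ r with hZ
  have h7 : 7 * q ^ r ≤ 8 * Z := by omega
  have h49 : 49 * (q ^ r * q ^ r) ≤ 64 * (Z * Z) :=
    calc 49 * (q ^ r * q ^ r) = (7 * q ^ r) * (7 * q ^ r) := by ring
      _ ≤ (8 * Z) * (8 * Z) := Nat.mul_le_mul h7 h7
      _ = 64 * (Z * Z) := by ring
  have hpow : q ^ r * q ^ r = q ^ (2 * s) * q ^ 2 := by
    rw [← pow_add, ← pow_add]; congr 1; omega
  have hq2 : 128 * q ≤ 49 * q ^ 2 + 64 := by nlinarith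
  have hkey : 2 * q ^ (2 * r - 1) ≤ Z ^ 2 + q ^ (2 * r - 2) := by
    have e1 : 2 * r - 1 = 2 * s + 1 := by omega
    have e2 : 2 * r - 2 = 2 * s := by omega
    rw [e1, e2]
    have h64 : 64 * (2 * q ^ (2 * s + 1)) ≤ 64 * (Z ^ 2 + q ^ (2 * s)) := by
      calc 64 * (2 * q ^ (2 * s + 1)) = 128 * q * q ^ (2 * s) := by rw [pow_succ]; ring
        _ ≤ (49 * q ^ 2 + 64) * q ^ (2 * s) := Nat.mul_le_mul_right _ hq2
        _ = 49 * (q ^ (2 * s) * q ^ 2) + 64 * q ^ (2 * s) := by ring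
        _ = 49 * (q ^ r * q ^ r) + 64 * q ^ (2 * s) := by rw [hpow]
        _ ≤ 64 * (Z * Z) + 64 * q ^ (2 * s) := by omega
        _ = 64 * (Z ^ 2 + q ^ (2 * s)) := by ring
    omega
  omega

/-- over any finite field `F_q`, there are infinitely many integers `r`
such that `#V(f_{r,2})* ≥ 2q^{2r-1} - q^{2r-2} - 1`, where
`f_{r,2}(x) = x_1⋯x_r + x_{r+1}⋯x_{2r}`. -/
theorem stmt19 (F : Type) [Field F] [Fintype F] [DecidableEq F] :
    {r : ℕ |
      (Finset.univ.filter (fun x : Fin (r * 2) → F => x ≠ 0 ∧ frk F r 2 x = 0)).card ≥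
        2 * Fintype.card F ^ (2 * r - 1) - Fintype.card F ^ (2 * r - 2) - 1}.Infinite := by
  classical
  set q := Fintype.card F with hq
  have hq2 : 2 ≤ q := Fintype.one_lt_card
  apply Set.Infinite.mono (s := Set.Ici (7 * (q - 1) + 1))
  · intro r hr
    simp only [Set.mem_Ici] at hr
    simp only [Set.mem_setOf_eq]
    have h8 : 8 * (q - 1) ^ r ≤ q ^ r := eight_pow_le q hq2 (by omega)
    calc 2 * q ^ (2 * r - 1) - q ^ (2 * r - 2) - 1
        ≤ (q ^ r - (q - 1) ^ r) ^ 2 - 1 := arith q r hq2 (by omega) h8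
      _ ≤ _ := lowerBound r
  · exact Set.Ici_infinite _
end
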